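/- arXiv:2105.03339 — 5 statements merged into one kernel-verified Lean document; each statement's English description precedes it below -/
import Mathlib

section
/- Let b > 0 and 0 = d_0 < d_1 < ... < d_k = b, and let h : [0,b] -> R/Z be a function that is continuous and monotonically increasing (i.e. admits continuous nondecreasing local lifts to R) on each open interval (d_{j-1}, d_j), has one-sided limits at each d_j, and has a jump discontinuity (distinct one-sided limits in R/Z) at each interior point d_1, ..., d_{k-1}. Then there exists a function G : [0,b] -> R, continuous on each open interval (d_{j-1}, d_j), satisfying: (i) G(u) mod 1 = h(u) for all u in [0,b] \ {d_1,...,d_{k-1}}; (ii) G is nondecreasing on [0,b] \ {d_1,...,d_{k-1}}; (iii) at each interior d_j the one-sided limits satisfy G^-(d_j) < G^+(d_j) < G^-(d_j) + 1; (iv) G(0) in [0,1). Moreover G is unique on [0,b] \ {d_1,...,d_{k-1}}. -/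
/-!
On each piece `(d j, d (j + 1))` the given monotone lift of `h` is bounded, since a continuous
monotone function whose reduction mod 1 converges at an end of an interval cannot run off to
`±∞` there (it would wind around the circle infinitely often); hence it has one-sided limits at
both ends. Shifting the pieces by integers from left to right, each piece is placed so that its
left-end limit lies in `[F, F + 1)`, where `F` is the right-end limit of the previous piece; as `h`
jumps at `d j`, the two limits differ mod 1, so the jump lies in `(0, 1)`.

Conversely, two such lifts differ on each piece by a locally constant integer. Their limits at the
left end of the piece lie in a common window `[F, F + 1)`, which forces that integer to vanish;
this propagates from left to right.
-/

open Set Filter Topology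

/-- The properties of the monotone lift `Γ h` of a piecewise-continuous, piecewise-monotone
circle-valued function `h` on `[0,b]`, with jump points among `{d 1, …, d (k-1)}`:
continuity on the open pieces, lifting `h` mod 1 off the jump points, monotonicity,
one-sided limits with jump sizes in `(0,1)` at the interior jump points (and jump sizes
`< 1` at the endpoints), and value at `0` in `[0,1)`. -/
def IsGammaLift (b : ℝ) (k : ℕ) (d : ℕ → ℝ) (h : ℝ → AddCircle (1 : ℝ)) (G : ℝ → ℝ) :
    Prop :=
  (∀ j < k, ContinuousOn G (Ioo (d j) (d (j + 1)))) ∧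
  (∀ u ∈ Icc 0 b \ (d '' {j : ℕ | 0 < j ∧ j < k}),
    ((G u : ℝ) : AddCircle (1 : ℝ)) = h u) ∧
  MonotoneOn G (Icc 0 b \ (d '' {j : ℕ | 0 < j ∧ j < k})) ∧
  (∀ j : ℕ, 0 < j → j < k → ∃ Gm Gp : ℝ,
    Tendsto G (nhdsWithin (d j) (Iio (d j))) (nhds Gm) ∧
    Tendsto G (nhdsWithin (d j) (Ioi (d j))) (nhds Gp) ∧
    Gm < Gp ∧ Gp < Gm + 1) ∧
  (∃ Gp : ℝ, Tendsto G (nhdsWithin 0 (Ioi (0:ℝ))) (nhds Gp) ∧ G 0 ≤ Gp ∧ Gp < G 0 + 1) ∧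
  (∃ Gm : ℝ, Tendsto G (nhdsWithin b (Iio b)) (nhds Gm) ∧ Gm ≤ G b ∧ G b < Gm + 1) ∧
  G 0 ∈ Ico (0:ℝ) 1

section Period

variable {p : ℝ} [Fact (0 < p)]

lemma lt_add_period_of_forall_coe_ne {X : Type*} [TopologicalSpace X] {S : Set X} {L : X → ℝ}
    {z : AddCircle p} (hS : IsPreconnected S) (hL : ContinuousOn L S)
    (hz : ∀ u ∈ S, (L u : AddCircle p) ≠ z) {x y : X} (hx : x ∈ S) (hy : y ∈ S) :
    L y < L x + p := by
  by_contra! hxy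
  obtain ⟨w, hw, rfl⟩ : z ∈ ((↑) : ℝ → AddCircle p) '' Ico (L x) (L x + p) := by
    rw [AddCircle.coe_image_Ico_eq]; trivial
  obtain ⟨u, hu, hLu⟩ := hS.intermediate_value hx hy hL ⟨hw.1, hw.2.le.trans hxy⟩
  exact hz u hu (congrArg _ hLu)

lemma AddCircle.exists_ne (ℓ : AddCircle p) : ∃ z, z ≠ ℓ := by
  have hp : 0 < p := Fact.out
  refine ⟨ℓ + ((p / 2 : ℝ) : AddCircle p), fun h => ?_⟩
  have : ((p / 2 : ℝ) : AddCircle p) = 0 := by simpa using h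
  rw [AddCircle.coe_eq_zero_iff_of_mem_Ico ⟨by positivity, by linarith⟩] at this
  linarith

lemma bddBelow_image_Ioo_of_tendsto_coe {a c : ℝ} {L : ℝ → ℝ} {ℓ : AddCircle p}
    (hac : a < c) (hL : ContinuousOn L (Ioo a c)) (hLm : MonotoneOn L (Ioo a c))
    (hT : Tendsto (fun u => (L u : AddCircle p)) (𝓝[>] a) (𝓝 ℓ)) :
    BddBelow (L '' Ioo a c) := by
  obtain ⟨z, hz⟩ := AddCircle.exists_ne ℓ
  obtain ⟨t, hat, ht⟩ := mem_nhdsGT_iff_exists_Ioo_subset.mp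
    (hT.eventually (isOpen_compl_singleton.mem_nhds hz.symm))
  obtain ⟨x, hax, hxt⟩ := exists_between (lt_min hat hac)
  refine ⟨L x - p, forall_mem_image.mpr fun u hu => ?_⟩
  rcases lt_or_ge u (min t c) with hut | hut
  · have := lt_add_period_of_forall_coe_ne isPreconnected_Ioo
      (hL.mono (Ioo_subset_Ioo_right (min_le_right _ _)))
      (fun v hv => ht ⟨hv.1, hv.2.trans_le (min_le_left _ _)⟩) ⟨hu.1, hut⟩ ⟨hax, hxt⟩
    linarith
  · have := hLm ⟨hax, hxt.trans_le (min_le_right _ _)⟩ hu (hxt.le.trans hut)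
    linarith [(Fact.out : 0 < p)]

lemma bddAbove_image_Ioo_of_tendsto_coe {a c : ℝ} {L : ℝ → ℝ} {ℓ : AddCircle p}
    (hac : a < c) (hL : ContinuousOn L (Ioo a c)) (hLm : MonotoneOn L (Ioo a c))
    (hT : Tendsto (fun u => (L u : AddCircle p)) (𝓝[<] c) (𝓝 ℓ)) :
    BddAbove (L '' Ioo a c) := by
  obtain ⟨z, hz⟩ := AddCircle.exists_ne ℓ
  obtain ⟨t, htc, ht⟩ := mem_nhdsLT_iff_exists_Ioo_subset.mp
    (hT.eventually (isOpen_compl_singleton.mem_nhds hz.symm))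
  obtain ⟨x, htx, hxc⟩ := exists_between (max_lt htc hac)
  refine ⟨L x + p, forall_mem_image.mpr fun u hu => ?_⟩
  rcases lt_or_ge (max t a) u with htu | htu
  · have := lt_add_period_of_forall_coe_ne isPreconnected_Ioo
      (hL.mono (Ioo_subset_Ioo_left (le_max_right _ _)))
      (fun v hv => ht ⟨(le_max_left _ _).trans_lt hv.1, hv.2⟩) ⟨htx, hxc⟩ ⟨htu, hu.2⟩
    linarith
  · have := hLm hu ⟨(le_max_right _ _).trans_lt htx, hxc⟩ (htu.trans htx.le)
    linarith [(Fact.out : 0 < p)]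

lemma eqOn_Ioo_of_coe_eq {a c x x' y : ℝ} {G G' : ℝ → ℝ} (hac : a < c)
    (hG : ContinuousOn G (Ioo a c)) (hG' : ContinuousOn G' (Ioo a c))
    (hcoe : ∀ u ∈ Ioo a c, (G u : AddCircle p) = G' u)
    (hx : Tendsto G (𝓝[>] a) (𝓝 x)) (hx' : Tendsto G' (𝓝[>] a) (𝓝 x'))
    (hxy : x ∈ Ico y (y + p)) (hx'y : x' ∈ Ico y (y + p)) : EqOn G G' (Ioo a c) := by
  intro u hu
  have hint : MapsTo (fun v => G' v - G v) (Ioo a c) (AddSubgroup.zmultiples p) :=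
    fun v hv => (QuotientAddGroup.eq_zero_iff _).mp (by simp [hcoe v hv])
  have hconst : EqOn (fun _ => G' u - G u) (fun v => G' v - G v) (Ioo a c) := fun v hv =>
    isPreconnected_Ioo.constant_of_mapsTo (isDiscrete_iff_discreteTopology.mpr
      (inferInstanceAs (DiscreteTopology (AddSubgroup.zmultiples p)))) (hG'.sub hG) hint hu hv
  have hlim : x' - x = G' u - G u := tendsto_nhds_unique (hx'.sub hx)
    (tendsto_const_nhds.congr' (hconst.eventuallyEq_of_mem (Ioo_mem_nhdsGT hac)))
  have hxx' : x = x' := by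
    refine (AddCircle.coe_eq_coe_iff_of_mem_Ico hxy hx'y).mp ?_
    rw [← sub_eq_zero, ← AddCircle.coe_sub, ← neg_sub, hlim, AddCircle.coe_neg,
      (QuotientAddGroup.eq_zero_iff _).mpr (hint hu), neg_zero]
  linarith

end Period

structure IsPieceLift (p q : ℝ) (h : ℝ → AddCircle (1 : ℝ)) (M : ℝ → ℝ) (e f : ℝ) : Prop where
  continuousOn : ContinuousOn M (Ioo p q)
  monotoneOn : MonotoneOn M (Ioo p q)
  coe_eq : ∀ u ∈ Ioo p q, (M u : AddCircle (1 : ℝ)) = h u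
  tendsto_nhdsGT : Tendsto M (𝓝[>] p) (𝓝 e)
  tendsto_nhdsLT : Tendsto M (𝓝[<] q) (𝓝 f)

namespace IsPieceLift

variable {p q e f : ℝ} {h : ℝ → AddCircle (1 : ℝ)} {M : ℝ → ℝ}

lemma le_apply (hM : IsPieceLift p q h M e f) {u : ℝ} (hu : u ∈ Ioo p q) : e ≤ M u :=
  le_of_tendsto hM.tendsto_nhdsGT <| mem_of_superset (Ioo_mem_nhdsGT hu.1) fun _ hv =>
    hM.monotoneOn ⟨hv.1, hv.2.trans hu.2⟩ hu hv.2.le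

lemma apply_le (hM : IsPieceLift p q h M e f) {u : ℝ} (hu : u ∈ Ioo p q) : M u ≤ f :=
  ge_of_tendsto hM.tendsto_nhdsLT <| mem_of_superset (Ioo_mem_nhdsLT hu.2) fun _ hv =>
    hM.monotoneOn hu ⟨hu.1.trans hv.1, hv.2⟩ hv.1.le

lemma left_le_right (hM : IsPieceLift p q h M e f) (hpq : p < q) : e ≤ f := by
  obtain ⟨u, hu⟩ := nonempty_Ioo.mpr hpq
  exact (hM.le_apply hu).trans (hM.apply_le hu)

lemma coe_left_eq (hM : IsPieceLift p q h M e f) (hpq : p < q) {ℓ : AddCircle (1 : ℝ)}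
    (hℓ : Tendsto h (𝓝[>] p) (𝓝 ℓ)) : (e : AddCircle (1 : ℝ)) = ℓ :=
  tendsto_nhds_unique ((AddCircle.continuous_mk' 1).continuousAt.tendsto.comp hM.tendsto_nhdsGT)
    (hℓ.congr' (EqOn.eventuallyEq_of_mem (fun u hu => (hM.coe_eq u hu).symm) (Ioo_mem_nhdsGT hpq)))

lemma coe_right_eq (hM : IsPieceLift p q h M e f) (hpq : p < q) {ℓ : AddCircle (1 : ℝ)}
    (hℓ : Tendsto h (𝓝[<] q) (𝓝 ℓ)) : (f : AddCircle (1 : ℝ)) = ℓ :=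
  tendsto_nhds_unique ((AddCircle.continuous_mk' 1).continuousAt.tendsto.comp hM.tendsto_nhdsLT)
    (hℓ.congr' (EqOn.eventuallyEq_of_mem (fun u hu => (hM.coe_eq u hu).symm) (Ioo_mem_nhdsLT hpq)))

lemma add_intCast (hM : IsPieceLift p q h M e f) (n : ℤ) :
    IsPieceLift p q h (fun u => M u + n) (e + n) (f + n) where
  continuousOn := hM.continuousOn.add continuousOn_const
  monotoneOn _ hu _ hv huv := by simpa using hM.monotoneOn hu hv huv
  coe_eq u hu := by simpa using hM.coe_eq u hu
  tendsto_nhdsGT := hM.tendsto_nhdsGT.add_const _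
  tendsto_nhdsLT := hM.tendsto_nhdsLT.add_const _

end IsPieceLift

lemma exists_isPieceLift {p q : ℝ} {h : ℝ → AddCircle (1 : ℝ)} {L : ℝ → ℝ}
    {ℓ ℓ' : AddCircle (1 : ℝ)} (hpq : p < q) (hL : ContinuousOn L (Ioo p q))
    (hLm : MonotoneOn L (Ioo p q)) (hLh : ∀ u ∈ Ioo p q, (L u : AddCircle (1 : ℝ)) = h u)
    (hℓ : Tendsto h (𝓝[>] p) (𝓝 ℓ)) (hℓ' : Tendsto h (𝓝[<] q) (𝓝 ℓ')) :
    ∃ e f, IsPieceLift p q h L e f := by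
  have hne : (Ioo p q).Nonempty := nonempty_Ioo.mpr hpq
  have hT : Tendsto (fun u => (L u : AddCircle (1 : ℝ))) (𝓝[>] p) (𝓝 ℓ) :=
    hℓ.congr' (EqOn.eventuallyEq_of_mem (fun u hu => (hLh u hu).symm) (Ioo_mem_nhdsGT hpq))
  have hT' : Tendsto (fun u => (L u : AddCircle (1 : ℝ))) (𝓝[<] q) (𝓝 ℓ') :=
    hℓ'.congr' (EqOn.eventuallyEq_of_mem (fun u hu => (hLh u hu).symm) (Ioo_mem_nhdsLT hpq))
  exact ⟨_, _, hL, hLm, hLh,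
    hLm.tendsto_nhdsWithin_Ioo_right hne (bddBelow_image_Ioo_of_tendsto_coe hpq hL hLm hT),
    hLm.tendsto_nhdsWithin_Ioo_left hne (bddAbove_image_Ioo_of_tendsto_coe hpq hL hLm hT')⟩

lemma exists_intCast_offsets (g : ℝ) (e f : ℕ → ℝ) : ∃ n : ℕ → ℤ,
    e 0 + n 0 ∈ Ico g (g + 1) ∧ ∀ j, e (j + 1) + n (j + 1) ∈ Ico (f j + n j) (f j + n j + 1) := by
  let n : ℕ → ℤ := fun j => Nat.rec (-toIcoDiv one_pos g (e 0))
    (fun j nj => -toIcoDiv one_pos (f j + nj) (e (j + 1))) j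
  refine ⟨n, ?_, fun j => ?_⟩
  · simpa [n, ← sub_eq_add_neg] using sub_toIcoDiv_zsmul_mem_Ico one_pos g (e 0)
  · simpa [n, ← sub_eq_add_neg] using
      sub_toIcoDiv_zsmul_mem_Ico one_pos (f j + Int.cast (n j)) (e (j + 1))

lemma le_of_interlaced {k : ℕ} {e f : ℕ → ℝ} (hef : ∀ j < k, e j ≤ f j)
    (hfe : ∀ j, j + 1 < k → f j ≤ e (j + 1)) {i j : ℕ} (hij : i < j) (hjk : j < k) : f i ≤ e j := by
  induction j, hij using Nat.le_induction with
  | base => exact hfe i hjk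
  | succ j hij ih => exact (ih (by omega)).trans ((hef j (by omega)).trans (hfe j hjk))

noncomputable def glue (b : ℝ) (k : ℕ) (d : ℕ → ℝ) (g₀ g_b : ℝ) (M : ℕ → ℝ → ℝ) (u : ℝ) : ℝ :=
  if u = 0 then g₀ else if u = b then g_b else M (Nat.findGreatest (fun i => d i < u) k) u

section Pieces

variable {b : ℝ} {k : ℕ} {d : ℕ → ℝ} {h : ℝ → AddCircle (1 : ℝ)} {g₀ g_b : ℝ}
  {M : ℕ → ℝ → ℝ} {e f : ℕ → ℝ}

lemma pos_of_strictMonoOn (hd : StrictMonoOn d (Iic k)) (hd0 : d 0 = 0) (hdk : d k = b)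
    (hk : 0 < k) : 0 < b :=
  hd0 ▸ hdk ▸ hd (mem_Iic.mpr (Nat.zero_le k)) (mem_Iic.mpr le_rfl) hk

lemma findGreatest_eq_of_mem_Ioo (hd : StrictMonoOn d (Iic k)) {j : ℕ} (hj : j < k) {u : ℝ}
    (hu : u ∈ Ioo (d j) (d (j + 1))) : Nat.findGreatest (fun i => d i < u) k = j := by
  refine Nat.findGreatest_eq_iff.mpr ⟨hj.le, fun _ => hu.1, fun n hjn hnk => ?_⟩
  exact not_lt.mpr (hu.2.le.trans (hd.monotoneOn (show j + 1 ≤ k by omega) hnk hjn))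

lemma Ioo_subset_Ioo_zero (hd : StrictMonoOn d (Iic k)) (hd0 : d 0 = 0) (hdk : d k = b)
    {j : ℕ} (hj : j < k) : Ioo (d j) (d (j + 1)) ⊆ Ioo 0 b := by
  rw [← hd0, ← hdk]
  exact Ioo_subset_Ioo (hd.monotoneOn (by simp) hj.le (Nat.zero_le j))
    (hd.monotoneOn (show j + 1 ≤ k by omega) (mem_Iic.mpr le_rfl) hj)

lemma Ioo_subset_regular (hd : StrictMonoOn d (Iic k)) (hd0 : d 0 = 0) (hdk : d k = b)
    {j : ℕ} (hj : j < k) :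
    Ioo (d j) (d (j + 1)) ⊆ Icc 0 b \ d '' {i : ℕ | 0 < i ∧ i < k} := by
  refine fun u hu => ⟨Ioo_subset_Icc_self (Ioo_subset_Ioo_zero hd hd0 hdk hj hu), ?_⟩
  rintro ⟨i, ⟨-, hik⟩, rfl⟩
  have h1 : j < i := (hd.lt_iff_lt hj.le hik.le).mp hu.1
  have h2 : i < j + 1 := (hd.lt_iff_lt hik.le (show j + 1 ≤ k by omega)).mp hu.2
  omega

lemma zero_mem_regular (hd : StrictMonoOn d (Iic k)) (hd0 : d 0 = 0) (hdk : d k = b) :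
    0 ∈ Icc 0 b \ d '' {i : ℕ | 0 < i ∧ i < k} := by
  refine ⟨⟨le_rfl, hd0 ▸ hdk ▸ hd.monotoneOn (by simp) (mem_Iic.mpr le_rfl) (Nat.zero_le k)⟩, ?_⟩
  rintro ⟨i, ⟨hi0, hik⟩, hi⟩
  exact (hd0 ▸ hd (mem_Iic.mpr (Nat.zero_le k)) (mem_Iic.mpr hik.le) hi0).ne' hi

lemma eq_zero_or_eq_or_mem_Ioo_of_mem_regular (hd0 : d 0 = 0) (hdk : d k = b) {u : ℝ}
    (hu : u ∈ Icc 0 b \ d '' {i : ℕ | 0 < i ∧ i < k}) :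
    u = 0 ∨ u = b ∨ ∃ j < k, u ∈ Ioo (d j) (d (j + 1)) := by
  obtain ⟨⟨h0u, hub⟩, hjump⟩ := hu
  rcases h0u.eq_or_lt with rfl | h0u
  · exact Or.inl rfl
  rcases hub.eq_or_lt with rfl | hub
  · exact Or.inr (Or.inl rfl)
  refine Or.inr (Or.inr ?_)
  set j := Nat.findGreatest (fun i => d i < u) k
  have hj : d j < u := Nat.findGreatest_spec (P := fun i => d i < u) (Nat.zero_le k) (by rwa [hd0])
  have hjk : j < k := (Nat.findGreatest_le k).lt_of_ne fun h => by
    rw [show j = k from h, hdk] at hj; linarith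
  have hu : u ≤ d (j + 1) := not_lt.mp (Nat.findGreatest_is_greatest (Nat.lt_succ_self j) hjk)
  refine ⟨j, hjk, hj, hu.lt_of_ne fun hu => ?_⟩
  rcases (show j + 1 ≤ k by omega).lt_or_eq with hj1 | hj1
  · exact hjump ⟨j + 1, ⟨j.succ_pos, hj1⟩, hu.symm⟩
  · rw [hj1, hdk] at hu; linarith

lemma index_le_of_mem_Ioo (hd : StrictMonoOn d (Iic k)) {i j : ℕ} (hi : i < k) {u v : ℝ}
    (hu : u ∈ Ioo (d i) (d (i + 1))) (hv : v ∈ Ioo (d j) (d (j + 1))) (huv : u ≤ v) : i ≤ j := by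
  by_contra! hji
  have := hd.monotoneOn (show j + 1 ≤ k by omega) hi.le hji
  linarith [hu.1, hv.2]

lemma glue_zero : glue b k d g₀ g_b M 0 = g₀ := if_pos rfl

lemma glue_self (hb : b ≠ 0) : glue b k d g₀ g_b M b = g_b := by
  simp [glue, hb]

lemma glue_eqOn_Ioo (hd : StrictMonoOn d (Iic k)) (hd0 : d 0 = 0) (hdk : d k = b) {j : ℕ}
    (hj : j < k) : EqOn (glue b k d g₀ g_b M) (M j) (Ioo (d j) (d (j + 1))) := by
  intro u hu
  obtain ⟨h0u, hub⟩ := Ioo_subset_Ioo_zero hd hd0 hdk hj hu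
  simp [glue, h0u.ne', hub.ne, findGreatest_eq_of_mem_Ioo hd hj hu]

lemma tendsto_glue_nhdsGT (hd : StrictMonoOn d (Iic k)) (hd0 : d 0 = 0) (hdk : d k = b)
    {j : ℕ} (hj : j < k) {x : ℝ} (hM : Tendsto (M j) (𝓝[>] (d j)) (𝓝 x)) :
    Tendsto (glue b k d g₀ g_b M) (𝓝[>] (d j)) (𝓝 x) :=
  hM.congr' ((glue_eqOn_Ioo hd hd0 hdk hj).symm.eventuallyEq_of_mem
    (Ioo_mem_nhdsGT (hd (mem_Iic.mpr hj.le) (show j + 1 ≤ k by omega) j.lt_succ_self)))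

lemma tendsto_glue_nhdsLT (hd : StrictMonoOn d (Iic k)) (hd0 : d 0 = 0) (hdk : d k = b)
    {j : ℕ} (hj : j < k) {x : ℝ} (hM : Tendsto (M j) (𝓝[<] (d (j + 1))) (𝓝 x)) :
    Tendsto (glue b k d g₀ g_b M) (𝓝[<] (d (j + 1))) (𝓝 x) :=
  hM.congr' ((glue_eqOn_Ioo hd hd0 hdk hj).symm.eventuallyEq_of_mem
    (Ioo_mem_nhdsLT (hd (mem_Iic.mpr hj.le) (show j + 1 ≤ k by omega) j.lt_succ_self)))

lemma monotoneOn_glue (hd : StrictMonoOn d (Iic k)) (hd0 : d 0 = 0) (hdk : d k = b)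
    (hk : 0 < k) (hM : ∀ j < k, IsPieceLift (d j) (d (j + 1)) h (M j) (e j) (f j))
    (hfe : ∀ j, j + 1 < k → f j ≤ e (j + 1)) (he₀ : g₀ ≤ e 0) (hg_b : f (k - 1) ≤ g_b) :
    MonotoneOn (glue b k d g₀ g_b M) (Icc 0 b \ d '' {j : ℕ | 0 < j ∧ j < k}) := by
  have hb : 0 < b := pos_of_strictMonoOn hd hd0 hdk hk
  have hpiece : ∀ j < k, ∀ u ∈ Ioo (d j) (d (j + 1)),
      e j ≤ glue b k d g₀ g_b M u ∧ glue b k d g₀ g_b M u ≤ f j := fun j hj u hu => by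
    rw [glue_eqOn_Ioo hd hd0 hdk hj hu]
    exact ⟨(hM j hj).le_apply hu, (hM j hj).apply_le hu⟩
  have hef : ∀ j < k, e j ≤ f j := fun j hj =>
    (hM j hj).left_le_right (hd (mem_Iic.mpr hj.le) (show j + 1 ≤ k by omega) j.lt_succ_self)
  have hg₀e : ∀ j < k, g₀ ≤ e j := fun j hj => by
    rcases j.eq_zero_or_pos with rfl | hj0
    · exact he₀
    · exact he₀.trans ((hef 0 hk).trans (le_of_interlaced hef hfe hj0 hj))
  have hfg_b : ∀ j < k, f j ≤ g_b := fun j hj => by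
    rcases (show j ≤ k - 1 by omega).lt_or_eq with hjk | rfl
    · exact ((le_of_interlaced hef hfe hjk (by omega)).trans (hef (k - 1) (by omega))).trans hg_b
    · exact hg_b
  intro u hu v hv huv
  rcases eq_zero_or_eq_or_mem_Ioo_of_mem_regular hd0 hdk hu with rfl | rfl | ⟨i, hi, hui⟩ <;>
  rcases eq_zero_or_eq_or_mem_Ioo_of_mem_regular hd0 hdk hv with rfl | rfl | ⟨j, hj, hvj⟩
  · exact le_rfl
  · rw [glue_zero, glue_self hb.ne']
    exact (hg₀e 0 hk).trans ((hef 0 hk).trans (hfg_b 0 hk))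
  · rw [glue_zero]
    exact (hg₀e j hj).trans (hpiece j hj v hvj).1
  · linarith
  · exact le_rfl
  · linarith [(Ioo_subset_Ioo_zero hd hd0 hdk hj hvj).2]
  · linarith [(Ioo_subset_Ioo_zero hd hd0 hdk hi hui).1]
  · rw [glue_self hb.ne']
    exact (hpiece i hi u hui).2.trans (hfg_b i hi)
  · rcases (index_le_of_mem_Ioo hd hi hui hvj huv).lt_or_eq with hij | rfl
    · exact (hpiece i hi u hui).2.trans
        ((le_of_interlaced hef hfe hij hj).trans (hpiece j hj v hvj).1)
    · rw [glue_eqOn_Ioo hd hd0 hdk hi hui, glue_eqOn_Ioo hd hd0 hdk hi hvj]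
      exact (hM i hi).monotoneOn hui hvj huv

lemma isGammaLift_glue (hd : StrictMonoOn d (Iic k)) (hd0 : d 0 = 0) (hdk : d k = b)
    (hk : 0 < k) (hM : ∀ j < k, IsPieceLift (d j) (d (j + 1)) h (M j) (e j) (f j))
    (hjump : ∀ j, j + 1 < k → e (j + 1) ∈ Ioo (f j) (f j + 1))
    (hg₀ : g₀ ∈ Ico 0 1) (hg₀h : (g₀ : AddCircle (1 : ℝ)) = h 0) (he₀ : e 0 ∈ Ico g₀ (g₀ + 1))
    (hg_b : g_b ∈ Ico (f (k - 1)) (f (k - 1) + 1)) (hg_bh : (g_b : AddCircle (1 : ℝ)) = h b) :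
    IsGammaLift b k d h (glue b k d g₀ g_b M) := by
  have hb : b ≠ 0 := (pos_of_strictMonoOn hd hd0 hdk hk).ne'
  refine ⟨fun j hj => (hM j hj).continuousOn.congr (glue_eqOn_Ioo hd hd0 hdk hj),
    fun u hu => ?_, monotoneOn_glue hd hd0 hdk hk hM (fun j hj => (hjump j hj).1.le) he₀.1 hg_b.1,
    fun j hj0 hjk => ?_, ?_, ?_, by rwa [glue_zero]⟩
  · rcases eq_zero_or_eq_or_mem_Ioo_of_mem_regular hd0 hdk hu with rfl | rfl | ⟨j, hj, huj⟩
    · rwa [glue_zero]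
    · rwa [glue_self hb]
    · rw [glue_eqOn_Ioo hd hd0 hdk hj huj]
      exact (hM j hj).coe_eq u huj
  · obtain ⟨i, rfl⟩ : ∃ i, j = i + 1 := ⟨j - 1, by omega⟩
    exact ⟨f i, e (i + 1),
      tendsto_glue_nhdsLT hd hd0 hdk (by omega) (hM i (by omega)).tendsto_nhdsLT,
      tendsto_glue_nhdsGT hd hd0 hdk hjk (hM _ hjk).tendsto_nhdsGT, hjump i hjk⟩
  · refine ⟨e 0, hd0 ▸ tendsto_glue_nhdsGT hd hd0 hdk hk (hM 0 hk).tendsto_nhdsGT, ?_⟩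
    rwa [glue_zero]
  · have hk1 : k - 1 < k := Nat.sub_lt hk one_pos
    have hlim := tendsto_glue_nhdsLT (g₀ := g₀) (g_b := g_b) hd hd0 hdk hk1
      (hM (k - 1) hk1).tendsto_nhdsLT
    rw [Nat.sub_add_cancel hk, hdk] at hlim
    exact ⟨f (k - 1), hlim, by rwa [glue_self hb]⟩

end Pieces

namespace IsGammaLift

variable {b : ℝ} {k : ℕ} {d : ℕ → ℝ} {h : ℝ → AddCircle (1 : ℝ)} {G G' : ℝ → ℝ}

lemma apply_zero_eq (hd : StrictMonoOn d (Iic k)) (hd0 : d 0 = 0) (hdk : d k = b)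
    (hG : IsGammaLift b k d h G) (hG' : IsGammaLift b k d h G') : G 0 = G' 0 := by
  obtain ⟨-, hcoe, -, -, -, -, h0⟩ := hG
  obtain ⟨-, hcoe', -, -, -, -, h0'⟩ := hG'
  have hz := zero_mem_regular hd hd0 hdk
  exact (AddCircle.coe_eq_coe_iff_of_mem_Ico (a := 0) (by simpa using h0) (by simpa using h0')).mp
    ((hcoe 0 hz).trans (hcoe' 0 hz).symm)

lemma eqOn_Ioo (hd : StrictMonoOn d (Iic k)) (hd0 : d 0 = 0) (hdk : d k = b)
    (hG : IsGammaLift b k d h G) (hG' : IsGammaLift b k d h G') {j : ℕ} (hj : j < k) :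
    EqOn G G' (Ioo (d j) (d (j + 1))) := by
  have hG0 := hG.apply_zero_eq hd hd0 hdk hG'
  obtain ⟨hcont, hcoe, -, hjump, hzero, -, -⟩ := hG
  obtain ⟨hcont', hcoe', -, hjump', hzero', -, -⟩ := hG'
  have hlt : ∀ {j}, j < k → d j < d (j + 1) := fun hj =>
    hd (mem_Iic.mpr hj.le) (show _ + 1 ≤ k by omega) (Nat.lt_succ_self _)
  have hcoe_eq : ∀ {j} (hj : j < k), ∀ u ∈ Ioo (d j) (d (j + 1)),
      (G u : AddCircle (1 : ℝ)) = G' u := fun hj u hu =>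
    (hcoe u (Ioo_subset_regular hd hd0 hdk hj hu)).trans
      (hcoe' u (Ioo_subset_regular hd hd0 hdk hj hu)).symm
  induction j with
  | zero =>
    obtain ⟨x, hx, hx0, hx1⟩ := hzero
    obtain ⟨x', hx', hx0', hx1'⟩ := hzero'
    rw [← hd0] at hx hx'
    exact eqOn_Ioo_of_coe_eq (hlt hj) (hcont 0 hj) (hcont' 0 hj) (hcoe_eq hj) hx hx'
      ⟨hx0, hx1⟩ (hG0 ▸ ⟨hx0', hx1'⟩)
  | succ j ih =>
    obtain ⟨y, x, hy, hx, hyx, hxy⟩ := hjump (j + 1) j.succ_pos hj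
    obtain ⟨y', x', hy', hx', hyx', hxy'⟩ := hjump' (j + 1) j.succ_pos hj
    obtain rfl : y = y' := tendsto_nhds_unique hy <| hy'.congr'
      ((ih (by omega)).symm.eventuallyEq_of_mem (Ioo_mem_nhdsLT (hlt (by omega))))
    exact eqOn_Ioo_of_coe_eq (hlt hj) (hcont _ hj) (hcont' _ hj) (hcoe_eq hj) hx hx'
      ⟨hyx.le, hxy⟩ ⟨hyx'.le, hxy'⟩

lemma eqOn (hd : StrictMonoOn d (Iic k)) (hd0 : d 0 = 0) (hdk : d k = b) (hk : 0 < k)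
    (hG : IsGammaLift b k d h G) (hG' : IsGammaLift b k d h G') :
    EqOn G G' (Icc 0 b \ d '' {j : ℕ | 0 < j ∧ j < k}) := by
  intro u hu
  rcases eq_zero_or_eq_or_mem_Ioo_of_mem_regular hd0 hdk hu with rfl | rfl | ⟨j, hj, huj⟩
  · exact hG.apply_zero_eq hd hd0 hdk hG'
  · have hk1 : k - 1 < k := Nat.sub_lt hk one_pos
    have hlt : d (k - 1) < d (k - 1 + 1) :=
      hd (mem_Iic.mpr hk1.le) (show k - 1 + 1 ≤ k by omega) (Nat.lt_succ_self _)
    have hlast := hG.eqOn_Ioo hd hd0 hdk hG' hk1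
    obtain ⟨-, hcoe, -, -, -, ⟨y, hy, hyu, huy⟩, -⟩ := hG
    obtain ⟨-, hcoe', -, -, -, ⟨y', hy', hyu', huy'⟩, -⟩ := hG'
    rw [Nat.sub_add_cancel hk, hdk] at hlt hlast
    obtain rfl : y = y' := tendsto_nhds_unique hy <| hy'.congr'
      (hlast.symm.eventuallyEq_of_mem (Ioo_mem_nhdsLT hlt))
    refine (AddCircle.coe_eq_coe_iff_of_mem_Ico ⟨hyu, huy⟩ ⟨hyu', huy'⟩).mp ?_
    rw [hcoe _ hu, hcoe' _ hu]
  · exact hG.eqOn_Ioo hd hd0 hdk hG' hj huj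

end IsGammaLift

lemma exists_isPieceLifts {k : ℕ} {d : ℕ → ℝ} {h : ℝ → AddCircle (1 : ℝ)}
    (hd : StrictMonoOn d (Iic k))
    (hlift : ∀ j < k, ∃ L : ℝ → ℝ,
      ContinuousOn L (Ioo (d j) (d (j + 1))) ∧ MonotoneOn L (Ioo (d j) (d (j + 1))) ∧
      ∀ u ∈ Ioo (d j) (d (j + 1)), ((L u : ℝ) : AddCircle (1 : ℝ)) = h u)
    (hlim : ∀ j ≤ k, ∃ lm lp : AddCircle (1 : ℝ),
      (0 < j → Tendsto h (𝓝[<] (d j)) (𝓝 lm)) ∧ (j < k → Tendsto h (𝓝[>] (d j)) (𝓝 lp)) ∧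
      (0 < j → j < k → lm ≠ lp)) :
    ∃ (M : ℕ → ℝ → ℝ) (e f : ℕ → ℝ),
      (∀ j < k, IsPieceLift (d j) (d (j + 1)) h (M j) (e j) (f j)) ∧
      ∀ j, j + 1 < k → (f j : AddCircle (1 : ℝ)) ≠ e (j + 1) := by
  choose! L hLc hLm hLh using hlift
  choose! lm lp hlm hlp hne using hlim
  have hlt : ∀ j < k, d j < d (j + 1) := fun j hj =>
    hd (mem_Iic.mpr hj.le) (show j + 1 ≤ k by omega) j.lt_succ_self
  have hpiece : ∀ j < k, ∃ e f, IsPieceLift (d j) (d (j + 1)) h (L j) e f := fun j hj =>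
    exists_isPieceLift (hlt j hj) (hLc j hj) (hLm j hj) (hLh j hj) (hlp j hj.le hj)
      (hlm (j + 1) hj j.succ_pos)
  choose! e f hef using hpiece
  refine ⟨L, e, f, hef, fun j hj => ?_⟩
  rw [(hef j (by omega)).coe_right_eq (hlt j (by omega)) (hlm (j + 1) hj.le j.succ_pos),
    (hef (j + 1) hj).coe_left_eq (hlt _ hj) (hlp (j + 1) hj.le hj)]
  exact hne (j + 1) hj.le j.succ_pos hj

theorem stmt_1_general (b : ℝ) (k : ℕ) (hk : 1 ≤ k)
    (d : ℕ → ℝ) (hd0 : d 0 = 0) (hdk : d k = b)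
    (hdmono : ∀ i j : ℕ, i < j → j ≤ k → d i < d j)
    (h : ℝ → AddCircle (1 : ℝ))
    (hlift : ∀ j < k, ∃ L : ℝ → ℝ,
      ContinuousOn L (Ioo (d j) (d (j + 1))) ∧ MonotoneOn L (Ioo (d j) (d (j + 1))) ∧
      ∀ u ∈ Ioo (d j) (d (j + 1)), ((L u : ℝ) : AddCircle (1 : ℝ)) = h u)
    (hlim : ∀ j ≤ k, ∃ lm lp : AddCircle (1 : ℝ),
      (0 < j → Tendsto h (nhdsWithin (d j) (Iio (d j))) (nhds lm)) ∧
      (j < k → Tendsto h (nhdsWithin (d j) (Ioi (d j))) (nhds lp)) ∧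
      (0 < j → j < k → lm ≠ lp)) :
    ∃ G : ℝ → ℝ, IsGammaLift b k d h G ∧
      ∀ G' : ℝ → ℝ, IsGammaLift b k d h G' →
        ∀ u ∈ Icc 0 b \ (d '' {j : ℕ | 0 < j ∧ j < k}), G' u = G u := by
  have hd : StrictMonoOn d (Iic k) := fun i _ j hj hij => hdmono i j hij hj
  obtain ⟨M, e, f, hM, hne⟩ := exists_isPieceLifts hd hlift hlim
  set g₀ : ℝ := (AddCircle.equivIco 1 0 (h 0) : ℝ)
  obtain ⟨n, hn₀, hn⟩ := exists_intCast_offsets g₀ e f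
  set g_b : ℝ := (AddCircle.equivIco 1 (f (k - 1) + n (k - 1)) (h b) : ℝ)
  have hG : IsGammaLift b k d h (glue b k d g₀ g_b fun j u => M j u + n j) := by
    refine isGammaLift_glue hd hd0 hdk hk (fun j hj => (hM j hj).add_intCast (n j))
      (fun j hj => ⟨(hn j).1.lt_of_ne fun heq => hne j hj ?_, (hn j).2⟩)
      (by simpa using (AddCircle.equivIco 1 0 (h 0)).2) AddCircle.coe_equivIco hn₀
      (AddCircle.equivIco 1 _ (h b)).2 AddCircle.coe_equivIco
    simpa using congrArg ((↑) : ℝ → AddCircle (1 : ℝ)) heq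
  exact ⟨_, hG, fun G' hG' => hG'.eqOn hd hd0 hdk hk hG⟩

theorem stmt_1 (b : ℝ) (hb : 0 < b) (k : ℕ) (hk : 1 ≤ k)
    (d : ℕ → ℝ) (hd0 : d 0 = 0) (hdk : d k = b)
    (hdmono : ∀ i j : ℕ, i < j → j ≤ k → d i < d j)
    (h : ℝ → AddCircle (1 : ℝ))
    (hlift : ∀ j < k, ∃ L : ℝ → ℝ,
      ContinuousOn L (Ioo (d j) (d (j + 1))) ∧ MonotoneOn L (Ioo (d j) (d (j + 1))) ∧
      ∀ u ∈ Ioo (d j) (d (j + 1)), ((L u : ℝ) : AddCircle (1 : ℝ)) = h u)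
    (hlim : ∀ j ≤ k, ∃ lm lp : AddCircle (1 : ℝ),
      (0 < j → Tendsto h (nhdsWithin (d j) (Iio (d j))) (nhds lm)) ∧
      (j < k → Tendsto h (nhdsWithin (d j) (Ioi (d j))) (nhds lp)) ∧
      (0 < j → j < k → lm ≠ lp)) :
    ∃ G : ℝ → ℝ, IsGammaLift b k d h G ∧
      ∀ G' : ℝ → ℝ, IsGammaLift b k d h G' →
        ∀ u ∈ Icc 0 b \ (d '' {j : ℕ | 0 < j ∧ j < k}), G' u = G u :=
  stmt_1_general b k hk d hd0 hdk hdmono h hlift hlim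
end

section
/- Let L > 0, c_1 > 0 and R >= 0. Let G : [0,L] -> R be a function satisfying G(v) - G(u) >= c_1 * (v - u) for all 0 <= u <= v <= L, and suppose the range of G is contained in an interval of length R. Then for every Lebesgue measurable set E contained in [0,1), the Lebesgue measure of { u in [0,L] : G(u) in E + Z } is at most c_1^{-1} * m(E) * (R + 2), where E + Z = { e + n : e in E, n in Z } and m denotes Lebesgue measure. -/
open Set MeasureTheory

/- STATEMENT 2: a function G on [0,L] expanding distances by at least c₁, whose range is
   contained in an interval of length R, has preimage of E + ℤ (E ⊆ [0,1)) of Lebesgue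
   measure at most c₁⁻¹ * m(E) * (R + 2). -/
theorem stmt_2 (L c₁ R : ℝ) (hL : 0 < L) (hc₁ : 0 < c₁) (hR : 0 ≤ R)
    (G : ℝ → ℝ)
    (hexp : ∀ u v : ℝ, 0 ≤ u → u ≤ v → v ≤ L → c₁ * (v - u) ≤ G v - G u)
    (hrange : ∃ t : ℝ, ∀ u ∈ Icc (0:ℝ) L, G u ∈ Icc t (t + R))
    (E : Set ℝ) (hE : MeasurableSet E) (hE1 : E ⊆ Ico (0:ℝ) 1) :
    volume {u : ℝ | u ∈ Icc (0:ℝ) L ∧ ∃ n : ℤ, G u - (n : ℝ) ∈ E}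
      ≤ ENNReal.ofReal (c₁⁻¹ * (R + 2)) * volume E := by
  obtain ⟨t, ht⟩ := hrange
  -- distance expansion in both orders
  have key : ∀ u v : ℝ, 0 ≤ u → u ≤ v → v ≤ L → v - u ≤ c₁⁻¹ * (G v - G u) := by
    intro u v h0 huv hvL
    have h := hexp u v h0 huv hvL
    nlinarith [mul_le_mul_of_nonneg_left h (inv_pos.mpr hc₁).le, inv_mul_cancel₀ hc₁.ne',
      inv_pos.mpr hc₁]
  have hdist : ∀ u ∈ Icc (0:ℝ) L, ∀ v ∈ Icc (0:ℝ) L,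
      dist u v ≤ c₁⁻¹ * dist (G u) (G v) := by
    intro u hu v hv
    rcases le_total u v with h | h
    · have h1 := hexp u v hu.1 h hv.2
      have h2 : 0 ≤ G v - G u := by nlinarith
      rw [Real.dist_eq, Real.dist_eq, abs_sub_comm u v, abs_sub_comm (G u) (G v),
        abs_of_nonneg (by linarith), abs_of_nonneg h2]
      exact key u v hu.1 h hv.2
    · have h1 := hexp v u hv.1 h hu.2
      have h2 : 0 ≤ G u - G v := by nlinarith
      rw [Real.dist_eq, Real.dist_eq, abs_of_nonneg (by linarith), abs_of_nonneg h2]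
      exact key v u hv.1 h hu.2
  have hinj : InjOn G (Icc (0:ℝ) L) := by
    intro u hu v hv huv
    have := hdist u hu v hv
    rw [huv, dist_self, mul_zero] at this
    exact dist_le_zero.mp this
  set g : ℝ → ℝ := Function.invFunOn G (Icc (0:ℝ) L) with hg
  have hgl : ∀ u ∈ Icc (0:ℝ) L, g (G u) = u := fun u hu => hinj.leftInvOn_invFunOn hu
  set K : NNReal := c₁⁻¹.toNNReal with hK
  have hKc : (K : ℝ) = c₁⁻¹ := Real.coe_toNNReal _ (by positivity)
  have hlip : LipschitzOnWith K g (G '' Icc (0:ℝ) L) := by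
    rw [lipschitzOnWith_iff_dist_le_mul]
    rintro x ⟨u, hu, rfl⟩ y ⟨v, hv, rfl⟩
    rw [hgl u hu, hgl v hv, hKc]
    exact hdist u hu v hv
  -- per-n sets
  set A : ℤ → Set ℝ := fun n => {u : ℝ | u ∈ Icc (0:ℝ) L ∧ G u - (n : ℝ) ∈ E} with hA
  have hAbound : ∀ n : ℤ, volume (A n) ≤ ENNReal.ofReal c₁⁻¹ * volume E := by
    intro n
    set S : Set ℝ := ((fun x => x + (n : ℝ)) '' E) ∩ (G '' Icc (0:ℝ) L) with hS
    have hsub : A n ⊆ g '' S := by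
      rintro u ⟨hu, huE⟩
      refine ⟨G u, ⟨⟨G u - n, huE, by ring⟩, ⟨u, hu, rfl⟩⟩, hgl u hu⟩
    calc volume (A n) ≤ volume (g '' S) := measure_mono hsub
      _ = μH[1] (g '' S) := by rw [MeasureTheory.hausdorffMeasure_real]
      _ ≤ (K : ENNReal) ^ (1:ℝ) * μH[1] S :=
          (hlip.mono inter_subset_right).hausdorffMeasure_image_le zero_le_one
      _ = (K : ENNReal) * volume S := by
          rw [ENNReal.rpow_one, MeasureTheory.hausdorffMeasure_real]
      _ ≤ (K : ENNReal) * volume ((fun x => x + (n : ℝ)) '' E) :=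
          mul_le_mul_right (measure_mono inter_subset_left) _
      _ = ENNReal.ofReal c₁⁻¹ * volume E := by
          rw [Set.image_add_right, measure_preimage_add_right]
          congr 1
  -- relevant n's
  set N : Finset ℤ := Finset.Ioc ⌊t - 1⌋ ⌊t + R⌋ with hN
  have hcover : {u : ℝ | u ∈ Icc (0:ℝ) L ∧ ∃ n : ℤ, G u - (n : ℝ) ∈ E} ⊆ ⋃ n ∈ N, A n := by
    rintro u ⟨hu, n, hn⟩
    have hGu := ht u hu
    have h1 := (hE1 hn).1
    have h2 := (hE1 hn).2
    have hmem : n ∈ N := by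
      rw [hN, Finset.mem_Ioc]
      constructor
      · have : (⌊t - 1⌋ : ℝ) ≤ t - 1 := Int.floor_le _
        exact_mod_cast Int.lt_of_lt_of_le (by exact_mod_cast (by push_cast; nlinarith [hGu.1] : (⌊t-1⌋ : ℝ) < n)) le_rfl
      · exact Int.le_floor.mpr (by push_cast; nlinarith [hGu.2])
    exact mem_biUnion hmem ⟨hu, hn⟩
  have hcard : ((N.card : ℝ)) ≤ R + 2 := by
    rw [hN, Int.card_Ioc]
    rcases le_total (⌊t + R⌋ - ⌊t - 1⌋) 0 with h | h
    · rw [Int.toNat_of_nonpos h]; push_cast; linarith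
    · have h1 : (⌊t + R⌋ : ℝ) ≤ t + R := Int.floor_le _
      have h2 : t - 1 - 1 < (⌊t - 1⌋ : ℝ) := by
        have := Int.sub_one_lt_floor (t - 1); linarith
      have hcast : ((⌊t + R⌋ - ⌊t - 1⌋).toNat : ℝ) = ((⌊t + R⌋ - ⌊t - 1⌋ : ℤ) : ℝ) := by
        exact_mod_cast congrArg (Int.cast : ℤ → ℝ) (Int.toNat_of_nonneg h)
      rw [hcast]; push_cast; linarith
  calc volume {u : ℝ | u ∈ Icc (0:ℝ) L ∧ ∃ n : ℤ, G u - (n : ℝ) ∈ E}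
      ≤ volume (⋃ n ∈ N, A n) := measure_mono hcover
    _ ≤ ∑ n ∈ N, volume (A n) := measure_biUnion_finset_le N A
    _ ≤ ∑ _n ∈ N, ENNReal.ofReal c₁⁻¹ * volume E := Finset.sum_le_sum fun n _ => hAbound n
    _ = (N.card : ENNReal) * (ENNReal.ofReal c₁⁻¹ * volume E) := by
        rw [Finset.sum_const, nsmul_eq_mul]
    _ ≤ ENNReal.ofReal (R + 2) * (ENNReal.ofReal c₁⁻¹ * volume E) := by
        gcongr
        rw [← ENNReal.ofReal_natCast]
        exact ENNReal.ofReal_le_ofReal hcard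
    _ = ENNReal.ofReal (c₁⁻¹ * (R + 2)) * volume E := by
        rw [ENNReal.ofReal_mul (by positivity), ← mul_assoc, mul_comm (ENNReal.ofReal (R+2))]
end

section
/- Let (X,d) be a compact metric space, S a closed subset of X, and c > 0; for xi > 0 write S_xi = { x in X : dist(x,S) <= xi }. Let T : X -> X be a Borel measurable injective map that is continuous at every point of X \ S. Let M_{S,c} denote the set of Borel probability measures nu on X such that nu(S_xi) <= c*xi for all xi > 0. If (nu_n) is a sequence in M_{S,c} converging to a measure nu in the weak* topology (i.e. integrals of every continuous function converge), then the pushforward measures T_* nu_n converge to T_* nu in the weak* topology. -/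
open Set MeasureTheory Filter Topology

/- The limit μ does not charge S: for every ξ > 0 the portmanteau theorem gives
μ S ≤ μ {dist(·,S) < ξ} ≤ liminf νₙ {dist(·,S) < ξ} ≤ cξ. So T is continuous μ-almost
everywhere, and the continuous mapping theorem applies: for closed F,
closure (T⁻¹ F) ⊆ T⁻¹ F ∪ S, hence limsup νₙ (T⁻¹ F) ≤ μ (closure (T⁻¹ F)) ≤ μ (T⁻¹ F). -/

lemma closure_preimage_subset_preimage_union {X Y : Type*} [TopologicalSpace X]
    [TopologicalSpace Y] {f : X → Y} {S : Set X} (hf : ∀ x ∉ S, ContinuousAt f x)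
    {F : Set Y} (hF : IsClosed F) : closure (f ⁻¹' F) ⊆ f ⁻¹' F ∪ S := by
  intro x hx
  by_cases hxS : x ∈ S
  · exact Or.inr hxS
  · have hfx : f x ∈ closure (f '' (f ⁻¹' F)) :=
      (hf x hxS).continuousWithinAt.mem_closure_image hx
    exact Or.inl (hF.closure_subset_iff.2 (image_preimage_subset f F) hfx)

lemma ENNReal.eq_zero_of_forall_le_ofReal_mul {a : ENNReal} {c : ℝ}
    (h : ∀ ξ : ℝ, 0 < ξ → a ≤ ENNReal.ofReal (c * ξ)) : a = 0 := by
  have hlim : Tendsto (fun ξ : ℝ => ENNReal.ofReal (c * ξ)) (𝓝[>] 0) (𝓝 0) :=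
    ((ENNReal.continuous_ofReal.comp (continuous_const.mul continuous_id)).tendsto' 0 0
      (by simp)).mono_left nhdsWithin_le_nhds
  exact nonpos_iff_eq_zero.1 (ge_of_tendsto hlim (eventually_nhdsWithin_of_forall h))

namespace MeasureTheory.ProbabilityMeasure

variable {Ω ι : Type*} [MeasurableSpace Ω] [TopologicalSpace Ω] [OpensMeasurableSpace Ω]
  [HasOuterApproxClosed Ω] {L : Filter ι} {μs : ι → ProbabilityMeasure Ω} {μ : ProbabilityMeasure Ω}

lemma measure_isOpen_le_of_tendsto [L.NeBot] (h : Tendsto μs L (𝓝 μ)) {G : Set Ω}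
    (hG : IsOpen G) {b : ENNReal} (hb : ∀ i, (μs i : Measure Ω) G ≤ b) :
    (μ : Measure Ω) G ≤ b :=
  (le_liminf_measure_open_of_tendsto h hG).trans
    (liminf_le_of_frequently_le' (Frequently.of_forall hb))

lemma measure_eq_zero_of_tendsto_of_infDist_le {X : Type*} [PseudoMetricSpace X]
    [MeasurableSpace X] [OpensMeasurableSpace X] {μs : ι → ProbabilityMeasure X} {μ : ProbabilityMeasure X} [L.NeBot]
    (h : Tendsto μs L (𝓝 μ)) {S : Set X} {c : ℝ}
    (hμs : ∀ i, ∀ ξ : ℝ, 0 < ξ →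
      (μs i : Measure X) {x | Metric.infDist x S ≤ ξ} ≤ ENNReal.ofReal (c * ξ)) :
    (μ : Measure X) S = 0 := by
  refine ENNReal.eq_zero_of_forall_le_ofReal_mul (c := c) fun ξ hξ => ?_
  have hS_sub : S ⊆ {x | Metric.infDist x S < ξ} := fun x hx => by
    simpa [Metric.infDist_zero_of_mem hx] using hξ
  refine (measure_mono hS_sub).trans (measure_isOpen_le_of_tendsto h ?_ fun i => ?_)
  · exact isOpen_lt (Metric.continuous_infDist_pt S) continuous_const
  · exact (measure_mono fun x (hx : _ < ξ) => hx.le).trans (hμs i ξ hξ)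

variable [L.IsCountablyGenerated] {Ω' : Type*} [MeasurableSpace Ω'] [TopologicalSpace Ω']
  [BorelSpace Ω']

theorem tendsto_map_of_tendsto_of_continuousAt_of_null (h : Tendsto μs L (𝓝 μ))
    {f : Ω → Ω'} (hf : Measurable f) {S : Set Ω} (hS : (μ : Measure Ω) S = 0)
    (hcont : ∀ x ∉ S, ContinuousAt f x) :
    Tendsto (fun i => (μs i).map hf.aemeasurable) L (𝓝 (μ.map hf.aemeasurable)) := by
  refine tendsto_of_forall_isClosed_limsup_le' fun F hF => ?_
  simp only [toMeasure_map, Measure.map_apply hf hF.measurableSet]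
  calc L.limsup (fun i => (μs i : Measure Ω) (f ⁻¹' F))
      ≤ L.limsup (fun i => (μs i : Measure Ω) (closure (f ⁻¹' F))) :=
        limsup_le_limsup (.of_forall fun i => measure_mono subset_closure)
    _ ≤ (μ : Measure Ω) (closure (f ⁻¹' F)) :=
        limsup_measure_closed_le_of_tendsto h isClosed_closure
    _ ≤ (μ : Measure Ω) (f ⁻¹' F ∪ S) :=
        measure_mono (closure_preimage_subset_preimage_union hcont hF)
    _ ≤ (μ : Measure Ω) (f ⁻¹' F) := (measure_union_le _ _).trans_eq (by rw [hS, add_zero])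

end MeasureTheory.ProbabilityMeasure

theorem stmt_3_general {X : Type*} [MetricSpace X] [CompactSpace X]
    [MeasurableSpace X] [BorelSpace X]
    (S : Set X) (c : ℝ)
    (T : X → X) (hTmeas : Measurable T)
    (hTcont : ∀ x ∉ S, ContinuousAt T x)
    (ν : ℕ → Measure X) (μ : Measure X)
    [∀ n, IsProbabilityMeasure (ν n)] [IsProbabilityMeasure μ]
    (hν : ∀ n : ℕ, ∀ ξ : ℝ, 0 < ξ →
      ν n {x | Metric.infDist x S ≤ ξ} ≤ ENNReal.ofReal (c * ξ))
    (hconv : ∀ f : C(X, ℝ),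
      Tendsto (fun n => ∫ x, f x ∂(ν n)) atTop (nhds (∫ x, f x ∂μ))) :
    ∀ f : C(X, ℝ),
      Tendsto (fun n => ∫ x, f x ∂((ν n).map T)) atTop (nhds (∫ x, f x ∂(μ.map T))) := by
  let P : ℕ → ProbabilityMeasure X := fun n => ⟨ν n, inferInstance⟩
  let Q : ProbabilityMeasure X := ⟨μ, inferInstance⟩
  have hPQ : Tendsto P atTop (𝓝 Q) :=
    ProbabilityMeasure.tendsto_iff_forall_integral_tendsto.2 fun f => hconv f.toContinuousMap
  have hμS : μ S = 0 := ProbabilityMeasure.measure_eq_zero_of_tendsto_of_infDist_le hPQ hν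
  have hmap := ProbabilityMeasure.tendsto_iff_forall_integral_tendsto.1 <|
    ProbabilityMeasure.tendsto_map_of_tendsto_of_continuousAt_of_null hPQ hTmeas hμS hTcont
  intro f
  exact hmap (BoundedContinuousFunction.mkOfCompact f)

theorem stmt_3 {X : Type*} [MetricSpace X] [CompactSpace X]
    [MeasurableSpace X] [BorelSpace X]
    (S : Set X) (hS : IsClosed S) (c : ℝ) (hc : 0 < c)
    (T : X → X) (hTmeas : Measurable T) (hTinj : Function.Injective T)
    (hTcont : ∀ x ∉ S, ContinuousAt T x)
    (ν : ℕ → Measure X) (μ : Measure X)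
    [∀ n, IsProbabilityMeasure (ν n)] [IsProbabilityMeasure μ]
    (hν : ∀ n : ℕ, ∀ ξ : ℝ, 0 < ξ →
      ν n {x | Metric.infDist x S ≤ ξ} ≤ ENNReal.ofReal (c * ξ))
    (hconv : ∀ f : C(X, ℝ),
      Tendsto (fun n => ∫ x, f x ∂(ν n)) atTop (nhds (∫ x, f x ∂μ))) :
    ∀ f : C(X, ℝ),
      Tendsto (fun n => ∫ x, f x ∂((ν n).map T)) atTop (nhds (∫ x, f x ∂(μ.map T))) :=
  stmt_3_general S c T hTmeas hTcont ν μ hν hconv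
end

section
/- Let (X,d) be a compact metric space, S a closed subset of X, and c > 0; for xi > 0 write S_xi = { x in X : dist(x,S) <= xi }. Let T : X -> X be a Borel measurable injective map that is continuous at every point of X \ S, and let M_{S,c} denote the set of Borel probability measures nu on X such that nu(S_xi) <= c*xi for all xi > 0. Let nu_0 be a Borel probability measure such that the averages nu_bar_n := (1/n) * sum_{i=0}^{n-1} (T^i)_* nu_0 belong to M_{S,c} for every n >= 1. Then any weak* accumulation point mu of the sequence (nu_bar_n) satisfies T_* mu = mu and mu belongs to M_{S,c}; in particular, T admits an invariant Borel probability measure mu with mu(S_xi) <= c*xi for all xi > 0. -/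
/-!
The Cesàro averages are almost invariant: `T_* ν̄_n + ν₀ / n = ν̄_n + T^n_* ν₀ / n`, so
`∫ f ∘ T dν̄_{φ k} → ∫ f dμ` for every bounded continuous `f`. It remains to show that
`∫ f ∘ T dν̄_{φ k} → ∫ f ∘ T dμ`, although `f ∘ T` may be discontinuous on `S`. Multiplying
`f ∘ T` by a continuous cutoff that vanishes near `S` and equals `1` off `S_ξ` makes it
continuous, at the cost of an error `≤ ‖f‖ c ξ` for every measure in `M_{S,c}`; this includes
`μ`, by the portmanteau theorem applied to the open sets `{dist(·, S) < ξ'}`, `ξ' > ξ`.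
Letting `ξ → 0` gives `∫ f ∘ T dμ = ∫ f dμ`.
-/

open Set MeasureTheory Filter Metric

open scoped ENNReal Topology BoundedContinuousFunction

section Cesaro

variable {X : Type*} [MeasurableSpace X] (ν₀ : Measure X) (T : X → X)

noncomputable def cesaroAverage (n : ℕ) : Measure X :=
  (n : ℝ≥0∞)⁻¹ • ∑ i ∈ Finset.range n, ν₀.map T^[i]

variable {ν₀ T}

lemma isProbabilityMeasure_cesaroAverage [IsProbabilityMeasure ν₀] (hT : Measurable T)
    {n : ℕ} (hn : n ≠ 0) : IsProbabilityMeasure (cesaroAverage ν₀ T n) := by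
  constructor
  simp [cesaroAverage, Measure.map_apply (hT.iterate _) MeasurableSet.univ,
    ENNReal.inv_mul_cancel (Nat.cast_ne_zero.mpr hn) (ENNReal.natCast_ne_top n)]

lemma map_cesaroAverage_add (hT : Measurable T) (n : ℕ) :
    (cesaroAverage ν₀ T n).map T + (n : ℝ≥0∞)⁻¹ • ν₀ =
      cesaroAverage ν₀ T n + (n : ℝ≥0∞)⁻¹ • ν₀.map T^[n] := by
  have hsucc : ∀ i, (ν₀.map T^[i]).map T = ν₀.map T^[i + 1] := fun i => by
    rw [Measure.map_map hT (hT.iterate i), ← Function.iterate_succ']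
  simp only [cesaroAverage, Measure.map_smul, Measure.map_finset_sum hT.aemeasurable, hsucc,
    ← smul_add]
  rw [← Finset.sum_range_succ, Finset.sum_range_succ']
  simp

variable [TopologicalSpace X] [OpensMeasurableSpace X]

lemma abs_integral_comp_sub_integral_cesaroAverage_le [IsProbabilityMeasure ν₀]
    (hT : Measurable T) (f : X →ᵇ ℝ) {n : ℕ} (hn : n ≠ 0) :
    |∫ x, f (T x) ∂cesaroAverage ν₀ T n - ∫ x, f x ∂cesaroAverage ν₀ T n| ≤ 2 * ‖f‖ / n := by
  have := isProbabilityMeasure_cesaroAverage (ν₀ := ν₀) hT hn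
  have := Measure.isProbabilityMeasure_map (μ := ν₀) (hT.iterate n).aemeasurable
  have hint : ∀ (ρ : Measure X) [IsFiniteMeasure ρ], Integrable f ρ := fun ρ _ => f.integrable ρ
  have key := congrArg (fun ρ => ∫ x, f x ∂ρ) (map_cesaroAverage_add (ν₀ := ν₀) hT n)
  have hn' : (n : ℝ≥0∞)⁻¹ ≠ ∞ := ENNReal.inv_ne_top.mpr (Nat.cast_ne_zero.mpr hn)
  rw [integral_add_measure (hint _) ((hint _).smul_measure hn'),
    integral_add_measure (hint _) ((hint _).smul_measure hn'),
    integral_smul_measure, integral_smul_measure,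
    integral_map hT.aemeasurable f.continuous.aestronglyMeasurable] at key
  have hdiff : ∫ x, f (T x) ∂cesaroAverage ν₀ T n - ∫ x, f x ∂cesaroAverage ν₀ T n =
      (n : ℝ)⁻¹ * (∫ x, f x ∂ν₀.map T^[n] - ∫ x, f x ∂ν₀) := by
    simp only [ENNReal.toReal_inv, ENNReal.toReal_natCast, smul_eq_mul] at key
    linarith
  rw [hdiff, abs_mul, abs_inv, Nat.abs_cast, inv_mul_eq_div]
  gcongr
  calc |∫ x, f x ∂ν₀.map T^[n] - ∫ x, f x ∂ν₀|
      ≤ |∫ x, f x ∂ν₀.map T^[n]| + |∫ x, f x ∂ν₀| := abs_sub _ _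
    _ ≤ ‖f‖ + ‖f‖ := add_le_add (f.norm_integral_le_norm _) (f.norm_integral_le_norm _)
    _ = 2 * ‖f‖ := by ring

lemma tendsto_integral_comp_of_tendsto_integral_cesaroAverage [IsProbabilityMeasure ν₀]
    (hT : Measurable T) {ι : Type*} {l : Filter ι} {N : ι → ℕ} (hN : Tendsto N l atTop)
    (hN0 : ∀ i, N i ≠ 0) (f : X →ᵇ ℝ) {L : ℝ}
    (hL : Tendsto (fun i => ∫ x, f x ∂cesaroAverage ν₀ T (N i)) l (𝓝 L)) :
    Tendsto (fun i => ∫ x, f (T x) ∂cesaroAverage ν₀ T (N i)) l (𝓝 L) := by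
  refine hL.congr_dist (squeeze_zero (fun _ => dist_nonneg) (fun i => ?_)
    ((tendsto_const_div_atTop_nhds_zero_nat (2 * ‖f‖)).comp hN))
  rw [dist_comm, Real.dist_eq]
  exact abs_integral_comp_sub_integral_cesaroAverage_le hT f (hN0 i)

end Cesaro

lemma abs_integral_sub_integral_mul_le {X : Type*} [MeasurableSpace X] {ν : Measure X}
    [IsFiniteMeasure ν] {g ψ : X → ℝ} {A : Set X} {C : ℝ}
    (hg : AEStronglyMeasurable g ν) (hgC : ∀ x, |g x| ≤ C) (hψ : AEStronglyMeasurable ψ ν)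
    (hψ01 : ∀ x, ψ x ∈ Icc 0 1) (hψA : ∀ x ∉ A, ψ x = 1) :
    |∫ x, g x ∂ν - ∫ x, g x * ψ x ∂ν| ≤ C * ν.real A := by
  have hgψC : ∀ x, |g x * ψ x| ≤ C := fun x => by
    rw [abs_mul, abs_of_nonneg (hψ01 x).1]
    exact (mul_le_of_le_one_right (abs_nonneg _) (hψ01 x).2).trans (hgC x)
  have hdiffC : ∀ x, |g x - g x * ψ x| ≤ C := fun x => by
    rw [← mul_one_sub, abs_mul, abs_of_nonneg (sub_nonneg.mpr (hψ01 x).2)]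
    exact (mul_le_of_le_one_right (abs_nonneg _) (by linarith [(hψ01 x).1])).trans (hgC x)
  rw [← integral_sub (.of_bound hg C (.of_forall hgC))
      (.of_bound (f := fun x => g x * ψ x) (hg.mul hψ) C (.of_forall hgψC)),
    ← setIntegral_eq_integral_of_forall_compl_eq_zero fun x hx => by simp [hψA x hx],
    ← Real.norm_eq_abs]
  exact norm_setIntegral_le_of_norm_le_const (measure_lt_top ν A) fun x _ => hdiffC x

lemma exists_cutoff_continuous_mul {X : Type*} [MetricSpace X] {S : Set X} {g : X → ℝ}
    (hg : ∀ x ∉ S, ContinuousAt g x) {ξ : ℝ} (hξ : 0 < ξ) :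
    ∃ ψ : C(X, ℝ), (∀ x, ψ x ∈ Icc 0 1) ∧ (∀ x, ξ < infDist x S → ψ x = 1) ∧
      Continuous fun x => g x * ψ x := by
  obtain ⟨ψ, hψS, hψ1, hψ01⟩ := exists_continuous_zero_one_of_isClosed
    (isClosed_le (continuous_infDist_pt S) continuous_const : IsClosed {x | infDist x S ≤ ξ / 2})
    (isClosed_le continuous_const (continuous_infDist_pt S) : IsClosed {x | ξ ≤ infDist x S})
    (disjoint_left.mpr fun x (h₁ : _ ≤ ξ / 2) (h₂ : ξ ≤ _) => by linarith)
  refine ⟨ψ, hψ01, fun x hx => hψ1 (le_of_lt hx), continuous_iff_continuousAt.mpr fun x => ?_⟩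
  by_cases hx : x ∈ S
  · have hnear : {y | infDist y S < ξ / 2} ∈ 𝓝 x :=
      (isOpen_lt (continuous_infDist_pt S) continuous_const).mem_nhds
        (by simp [infDist_zero_of_mem hx, hξ])
    refine continuousAt_const.congr (f := fun _ => (0 : ℝ)) ?_
    filter_upwards [hnear] with y hy
    simp [hψS (le_of_lt hy)]
  · exact (hg x hx).mul ψ.continuous.continuousAt

section WeakLimit

variable {X : Type*} [MetricSpace X] [MeasurableSpace X] [BorelSpace X] {S : Set X} {c : ℝ}
  {ι : Type*} {l : Filter ι} {P : ι → ProbabilityMeasure X} {μ : ProbabilityMeasure X}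

lemma measure_infDist_le_le_of_tendsto [l.NeBot] (hPμ : Tendsto P l (𝓝 μ))
    (hP : ∀ i, ∀ ξ > 0, (P i : Measure X) {x | infDist x S ≤ ξ} ≤ ENNReal.ofReal (c * ξ))
    {ξ : ℝ} (hξ : 0 < ξ) : (μ : Measure X) {x | infDist x S ≤ ξ} ≤ ENNReal.ofReal (c * ξ) := by
  have hcont : Tendsto (fun η => ENNReal.ofReal (c * η)) (𝓝[>] ξ) (𝓝 (ENNReal.ofReal (c * ξ))) :=
    (ENNReal.continuous_ofReal.comp (continuous_const_mul c)).continuousAt.tendsto.mono_left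
      nhdsWithin_le_nhds
  refine ge_of_tendsto hcont (eventually_nhdsWithin_of_forall fun η (hη : ξ < η) => ?_)
  calc (μ : Measure X) {x | infDist x S ≤ ξ}
      ≤ (μ : Measure X) {x | infDist x S < η} := measure_mono fun x hx => lt_of_le_of_lt hx hη
    _ ≤ l.liminf fun i => (P i : Measure X) {x | infDist x S < η} :=
        ProbabilityMeasure.le_liminf_measure_open_of_tendsto hPμ
          (isOpen_lt (continuous_infDist_pt S) continuous_const)
    _ ≤ ENNReal.ofReal (c * η) := liminf_le_of_frequently_le' <| .of_forall fun i =>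
        (measure_mono fun x (hx : infDist x S < η) => hx.le).trans (hP i η (hξ.trans hη))

lemma integral_comp_eq_of_tendsto [l.NeBot] (hPμ : Tendsto P l (𝓝 μ)) {T : X → X}
    (hT : Measurable T) (hTcont : ∀ x ∉ S, ContinuousAt T x)
    (hP : ∀ i, ∀ ξ > 0, (P i : Measure X).real {x | infDist x S ≤ ξ} ≤ c * ξ)
    (hμ : ∀ ξ > 0, (μ : Measure X).real {x | infDist x S ≤ ξ} ≤ c * ξ)
    (f : X →ᵇ ℝ) {L : ℝ} (hL : Tendsto (fun i => ∫ x, f (T x) ∂(P i : Measure X)) l (𝓝 L)) :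
    L = ∫ x, f (T x) ∂(μ : Measure X) := by
  have hfT : ∀ x, |f (T x)| ≤ ‖f‖ := fun x => f.norm_coe_le_norm (T x)
  have hbound : ∀ ξ > 0, |L - ∫ x, f (T x) ∂(μ : Measure X)| ≤ 2 * ‖f‖ * c * ξ := by
    intro ξ hξ
    obtain ⟨ψ, hψ01, hψ1, hcont⟩ := exists_cutoff_continuous_mul
      (fun x hx => f.continuous.continuousAt.comp (hTcont x hx)) hξ
    let h : X →ᵇ ℝ := .ofNormedAddCommGroup _ hcont ‖f‖ fun x => by
      rw [Real.norm_eq_abs, abs_mul, abs_of_nonneg (hψ01 x).1]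
      exact (mul_le_of_le_one_right (abs_nonneg _) (hψ01 x).2).trans (hfT x)
    have herr : ∀ (ν : Measure X) [IsProbabilityMeasure ν],
        ν.real {x | infDist x S ≤ ξ} ≤ c * ξ →
        |∫ x, f (T x) ∂ν - ∫ x, h x ∂ν| ≤ ‖f‖ * (c * ξ) := fun ν _ hν =>
      (abs_integral_sub_integral_mul_le (A := {x | infDist x S ≤ ξ})
        (f.continuous.measurable.comp hT).aestronglyMeasurable hfT
        ψ.continuous.aestronglyMeasurable hψ01 fun x hx => hψ1 x (not_le.mp hx)).trans
        (mul_le_mul_of_nonneg_left hν (norm_nonneg f))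
    have hPh : |L - ∫ x, h x ∂(μ : Measure X)| ≤ ‖f‖ * (c * ξ) :=
      le_of_tendsto ((hL.sub (ProbabilityMeasure.tendsto_iff_forall_integral_tendsto.mp hPμ h)).abs)
        (.of_forall fun i => herr _ (hP i ξ hξ))
    have hμh := herr _ (hμ ξ hξ)
    rw [abs_sub_comm] at hμh
    linarith [abs_sub_le L (∫ x, h x ∂(μ : Measure X)) (∫ x, f (T x) ∂(μ : Measure X))]
  have hzero : Tendsto (fun ξ => 2 * ‖f‖ * c * ξ) (𝓝[>] 0) (𝓝 0) := by
    simpa using ((continuous_const_mul (2 * ‖f‖ * c)).tendsto 0).mono_left nhdsWithin_le_nhds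
  refine sub_eq_zero.mp (abs_nonpos_iff.mp ?_)
  exact ge_of_tendsto hzero (eventually_nhdsWithin_of_forall fun ξ (hξ : 0 < ξ) => hbound ξ hξ)

end WeakLimit

theorem stmt_5_general {X : Type*} [MetricSpace X]
    [MeasurableSpace X] [BorelSpace X]
    (S : Set X) (c : ℝ) (hc : 0 < c)
    (T : X → X) (hTmeas : Measurable T)
    (hTcont : ∀ x ∉ S, ContinuousAt T x)
    (ν₀ : Measure X) [IsProbabilityMeasure ν₀]
    (νbar : ℕ → Measure X)
    (hνbar : ∀ n : ℕ, 1 ≤ n →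
      νbar n = (n : ENNReal)⁻¹ • ∑ i ∈ Finset.range n, ν₀.map (T^[i]))
    (hM : ∀ n : ℕ, 1 ≤ n → ∀ ξ : ℝ, 0 < ξ →
      νbar n {x | Metric.infDist x S ≤ ξ} ≤ ENNReal.ofReal (c * ξ))
    (μ : Measure X) [IsProbabilityMeasure μ]
    (φ : ℕ → ℕ) (hφ : StrictMono φ) (hφ1 : ∀ k, 1 ≤ φ k)
    (hconv : ∀ f : C(X, ℝ),
      Tendsto (fun k => ∫ x, f x ∂(νbar (φ k))) atTop (nhds (∫ x, f x ∂μ))) :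
    (μ.map T = μ ∧
      ∀ ξ : ℝ, 0 < ξ → μ {x | Metric.infDist x S ≤ ξ} ≤ ENNReal.ofReal (c * ξ)) ∧
    ∃ μ' : Measure X, IsProbabilityMeasure μ' ∧ μ'.map T = μ' ∧
      ∀ ξ : ℝ, 0 < ξ → μ' {x | Metric.infDist x S ≤ ξ} ≤ ENNReal.ofReal (c * ξ) := by
  have hφ0 : ∀ k, φ k ≠ 0 := fun k => Nat.one_le_iff_ne_zero.mp (hφ1 k)
  have hνbarφ : ∀ k, νbar (φ k) = cesaroAverage ν₀ T (φ k) := fun k => hνbar _ (hφ1 k)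
  let P : ℕ → ProbabilityMeasure X := fun k =>
    ⟨cesaroAverage ν₀ T (φ k), isProbabilityMeasure_cesaroAverage hTmeas (hφ0 k)⟩
  have hconv' : ∀ f : X →ᵇ ℝ, Tendsto (fun k => ∫ x, f x ∂(P k : Measure X)) atTop
      (𝓝 (∫ x, f x ∂μ)) := fun f => by
    have := hconv f.toContinuousMap
    simp only [hνbarφ] at this
    exact this
  have hPμ : Tendsto P atTop (𝓝 ⟨μ, ‹_›⟩) :=
    ProbabilityMeasure.tendsto_iff_forall_integral_tendsto.mpr hconv'
  have hPM : ∀ k, ∀ ξ > 0, (P k : Measure X) {x | infDist x S ≤ ξ} ≤ ENNReal.ofReal (c * ξ) := by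
    intro k ξ hξ
    have := hM _ (hφ1 k) ξ hξ
    rw [hνbarφ] at this
    exact this
  have hμM : ∀ ξ > 0, μ {x | infDist x S ≤ ξ} ≤ ENNReal.ofReal (c * ξ) :=
    fun ξ => measure_infDist_le_le_of_tendsto hPμ hPM
  have hinv : μ.map T = μ := by
    have := Measure.isProbabilityMeasure_map (μ := μ) hTmeas.aemeasurable
    refine ext_of_forall_integral_eq_of_IsFiniteMeasure fun f => ?_
    rw [integral_map hTmeas.aemeasurable f.continuous.aestronglyMeasurable]
    refine (integral_comp_eq_of_tendsto hPμ hTmeas hTcont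
      (fun k ξ hξ => ENNReal.toReal_le_of_le_ofReal (by positivity) (hPM k ξ hξ))
      (fun ξ hξ => ENNReal.toReal_le_of_le_ofReal (by positivity) (hμM ξ hξ)) f
      (tendsto_integral_comp_of_tendsto_integral_cesaroAverage hTmeas hφ.tendsto_atTop hφ0 f
        (hconv' f))).symm
  exact ⟨⟨hinv, hμM⟩, μ, ‹_›, hinv, hμM⟩

theorem stmt_5 {X : Type*} [MetricSpace X] [CompactSpace X]
    [MeasurableSpace X] [BorelSpace X]
    (S : Set X) (hS : IsClosed S) (c : ℝ) (hc : 0 < c)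
    (T : X → X) (hTmeas : Measurable T) (hTinj : Function.Injective T)
    (hTcont : ∀ x ∉ S, ContinuousAt T x)
    (ν₀ : Measure X) [IsProbabilityMeasure ν₀]
    (νbar : ℕ → Measure X)
    (hνbar : ∀ n : ℕ, 1 ≤ n →
      νbar n = (n : ENNReal)⁻¹ • ∑ i ∈ Finset.range n, ν₀.map (T^[i]))
    (hM : ∀ n : ℕ, 1 ≤ n → ∀ ξ : ℝ, 0 < ξ →
      νbar n {x | Metric.infDist x S ≤ ξ} ≤ ENNReal.ofReal (c * ξ))
    (μ : Measure X) [IsProbabilityMeasure μ]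
    (φ : ℕ → ℕ) (hφ : StrictMono φ) (hφ1 : ∀ k, 1 ≤ φ k)
    (hconv : ∀ f : C(X, ℝ),
      Tendsto (fun k => ∫ x, f x ∂(νbar (φ k))) atTop (nhds (∫ x, f x ∂μ))) :
    (μ.map T = μ ∧
      ∀ ξ : ℝ, 0 < ξ → μ {x | Metric.infDist x S ≤ ξ} ≤ ENNReal.ofReal (c * ξ)) ∧
    ∃ μ' : Measure X, IsProbabilityMeasure μ' ∧ μ'.map T = μ' ∧
      ∀ ξ : ℝ, 0 < ξ → μ' {x | Metric.infDist x S ≤ ξ} ≤ ENNReal.ofReal (c * ξ) :=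
  stmt_5_general S c hc T hTmeas hTcont ν₀ νbar hνbar hM μ φ hφ hφ1 hconv
end

section
/- In the coupled-curve setting below, there exists a constant c_1 > 0, depending only on c' and the flows g_1, g_2 (in particular independent of n), such that for every n >= 0 and i = 1,2: the set S(psi_n^i) of points where psi_n^i fails to be C^1 is finite, and (psi_n^i)'(u) >= c_1 for every u in [0, e^{lambda n} a] outside S(psi_n^i). -/
/-!
Off a closed discrete set `D`, every coordinate of `θ_n` has continuous nondecreasing lifts that
are `C¹` on the pieces of `ℝ \ D`. This propagates from `θ_n` to `θ_{n+1}`: adding `r_i ∘ ι_n`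
makes the lifts strictly monotone, so on a bounded piece `ψ_n` meets the rest points `0, 1/2` of
the flows only finitely often; between two such meetings the return time `τ(ψ_n)` is constant,
and a time-`t` map of a flow is an increasing homeomorphism which is `C¹` away from rest points.
Rescaling by `e^{-λ}` preserves the discreteness of the bad set.

Hence `ψ_n^i = θ_n^i + r_i ∘ ι_n` is `C¹` off `D`, which meets `[0, e^{λn} a]` in a finite set,
and wherever `ψ_n^i` is `C¹` its derivative is at least `(r_i ∘ ι_n)' = β r_i' > β c'`, because
`θ_n^i` is nondecreasing on one side of the point. So `c₁ = β c'` works.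
-/

noncomputable section

open Real Set Filter Topology MeasureTheory
open scoped Classical

instance factOneLtZero : Fact ((0:ℝ) < 1) := ⟨zero_lt_one⟩

/-- The circle `𝕋 = ℝ/ℤ`. -/
abbrev Circ : Type := AddCircle (1 : ℝ)

/-- The projection `ℝ → 𝕋`. -/
def coeT (x : ℝ) : Circ := (x : Circ)

/-- The representative of a point of `𝕋` in `[0,1)` (identification of `𝕋` with `[0,1)`). -/
def rep (z : Circ) : ℝ := (AddCircle.equivIco 1 0 z : ℝ)

/-- `f : ℝ → 𝕋` has derivative `d` at `u`, computed via a local lift. -/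
def HasCircDerivAt (f : ℝ → Circ) (d : ℝ) (u : ℝ) : Prop :=
  ∃ F : ℝ → ℝ, (∀ᶠ v in nhds u, coeT (F v) = f v) ∧ HasDerivAt F d u

/-- `f : ℝ → 𝕋` is `C¹` on a neighborhood of `u` (via a local lift). -/
def IsC1At (f : ℝ → Circ) (u : ℝ) : Prop :=
  ∃ (F : ℝ → ℝ) (ε : ℝ), 0 < ε ∧ (∀ v ∈ Ioo (u - ε) (u + ε), coeT (F v) = f v) ∧
    ContDiffOn ℝ 1 F (Ioo (u - ε) (u + ε))

/-- `f : ℝ → 𝕋` is continuous and monotonically increasing on a neighborhood of `u`,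
i.e. admits a continuous nondecreasing local lift there. -/
def ContMonoNear (f : ℝ → Circ) (u : ℝ) : Prop :=
  ∃ (F : ℝ → ℝ) (ε : ℝ), 0 < ε ∧ (∀ v ∈ Ioo (u - ε) (u + ε), coeT (F v) = f v) ∧
    ContinuousOn F (Ioo (u - ε) (u + ε)) ∧ MonotoneOn F (Ioo (u - ε) (u + ε))

/-- `f : ℝ → 𝕋` is `C¹` on a neighborhood of `u`, except possibly at `u` itself. -/
def C1StarNear (f : ℝ → Circ) (u : ℝ) : Prop :=
  ∃ ε : ℝ, 0 < ε ∧ ∀ v ∈ Ioo (u - ε) (u + ε), v ≠ u → IsC1At f v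

/-- The number of the coordinates of `z = (z₁, z₂) ∈ 𝕋²` lying in the arc `(1/2, 1)`. -/
def cnt (z : Circ × Circ) : ℕ :=
  (if 1/2 < rep z.1 then 1 else 0) + (if 1/2 < rep z.2 then 1 else 0)

/-- The basic data of the model with `N = 2` inhibitory components: the constants
`λ, b, c, κ, c', a, β`, the function `Φ`, the (lifted) North-South flows `G i` generated by
the (lifted) `C²` vector fields `V i` vanishing exactly at `0` and `1/2` (mod 1), the arcs
`I_i^±` (via `δ_i^±`), and assumptions (A1)-(A2). -/
structure Base where
  lam : ℝ
  b : ℝ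
  c : ℝ
  kappa : ℕ
  c' : ℝ
  a : ℝ
  beta : ℝ
  lam_pos : 0 < lam
  b_mem : b ∈ Ioo (0:ℝ) 1
  c_mem : c ∈ Ioo (0:ℝ) 1
  kappa_pos : 0 < kappa
  c'_pos : 0 < c'
  a_pos : 0 < a
  beta_pos : 0 < beta
  /-- the feedback strength function `Φ : {0,1,2} → [0,1)` -/
  Phi : ℕ → ℝ
  Phi_zero : Phi 0 = 0
  Phi_mono : ∀ m n : ℕ, m < n → n ≤ 2 → Phi m < Phi n
  Phi_nonneg : ∀ n ≤ 2, 0 ≤ Phi n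
  Phi_lt_one : ∀ n ≤ 2, Phi n < 1
  /-- lifts of the vector fields generating the North-South flows -/
  V : Fin 2 → ℝ → ℝ
  /-- lifts of the North-South flows `g_i^t` -/
  G : Fin 2 → ℝ → ℝ → ℝ
  V_smooth : ∀ i, ContDiff ℝ 2 (V i)
  V_periodic : ∀ i x, V i (x + 1) = V i x
  V_zero_iff : ∀ i x, V i x = 0 ↔ ∃ n : ℤ, x = n ∨ x = n + 1/2
  V_deriv_zero_neg : ∀ i, deriv (V i) 0 < 0
  V_deriv_half_pos : ∀ i, 0 < deriv (V i) (1/2)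
  G_zero : ∀ i x, G i 0 x = x
  G_add : ∀ i s t x, G i (s + t) x = G i s (G i t x)
  G_periodic : ∀ i t x, G i t (x + 1) = G i t x + 1
  G_ode : ∀ i x t, HasDerivAt (fun s => G i s x) (V i (G i t x)) t
  /-- half-width of the arc `I_i^+` around the N-pole `1/2` -/
  deltaP : Fin 2 → ℝ
  /-- half-width of the arc `I_i^-` around the S-pole `0` -/
  deltaM : Fin 2 → ℝ
  deltaP_pos : ∀ i, 0 < deltaP i
  deltaM_pos : ∀ i, 0 < deltaM i
  /-- (A1), expansion part: `(g_i^t)' > e^λ` on `I_i^+` for `1-b ≤ t ≤ τ_max` -/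
  A1_exp : ∀ i, ∀ t ∈ Icc (1 - b) ((1 - b) * (1 - Phi 2)⁻¹),
    ∀ x ∈ Icc (1/2 - deltaP i) (1/2 + deltaP i), Real.exp lam < deriv (G i t) x
  /-- (A1), contraction part: `(g_i^t)' ≤ c` on `I_i^-` for `1-b ≤ t ≤ τ_max` -/
  A1_con : ∀ i, ∀ t ∈ Icc (1 - b) ((1 - b) * (1 - Phi 2)⁻¹),
    ∀ x ∈ Icc (-(deltaM i)) (deltaM i), deriv (G i t) x ≤ c
  /-- (A2): `g_i^t(I_i^+) ⊇ 𝕋 \ I_i^-` for `1-b ≤ t ≤ τ_max` -/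
  A2 : ∀ i, ∀ t ∈ Icc (1 - b) ((1 - b) * (1 - Phi 2)⁻¹),
    (coeT '' Icc (-(deltaM i)) (deltaM i))ᶜ ⊆
      (fun x => coeT (G i t x)) '' Icc (1/2 - deltaP i) (1/2 + deltaP i)

namespace Base

variable (B : Base)

/-- The maximal return time `τ_max = (1-b)(1-Φ(2))⁻¹`. -/
def tauMax : ℝ := (1 - B.b) * (1 - B.Phi 2)⁻¹

/-- The return time `τ(z₁,z₂) = (1-b)(1-Φ(#{i : z_i ∈ (1/2,1)}))⁻¹` from `Σ_b` to `Σ₀`. -/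
def tauT (z : Circ × Circ) : ℝ := (1 - B.b) * (1 - B.Phi (cnt z))⁻¹

/-- The North-South flow `g_i^t` on the circle. -/
def gT (i : Fin 2) (t : ℝ) (z : Circ) : Circ := coeT (B.G i t (rep z))

/-- The arc `I_i^+ = [1/2 - δ_i^+, 1/2 + δ_i^+] ⊆ 𝕋`. -/
def IiP (i : Fin 2) : Set Circ := coeT '' Icc (1/2 - B.deltaP i) (1/2 + B.deltaP i)

/-- The arc `I_i^- = [-δ_i^-, δ_i^-] ⊆ 𝕋`. -/
def IiM (i : Fin 2) : Set Circ := coeT '' Icc (-(B.deltaM i)) (B.deltaM i)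

/-- `d_i = dist(∂ I_i^-, ∂ g_i^{1-b}(I_i^+))`. -/
def dd (i : Fin 2) : ℝ :=
  sInf {r : ℝ | ∃ x ∈ frontier (B.IiM i),
    ∃ y ∈ frontier ((B.gT i (1 - B.b)) '' (B.IiP i)), r = dist x y}

end Base

/-- The full data of the model with `N = 2`: the base data together with `ε`, the lifted
rotation maps `R i` (local diffeomorphisms `r_i` of the circle of degree `deg i ≤ κ`)
satisfying (A3)-(A4), and the base points `x0 n` of the iterated curves. -/
structure Setting extends Base where
  eps : ℝ
  eps_pos : 0 < eps
  /-- lifts of the rotation maps `r_i : 𝕋 → 𝕋` -/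
  R : Fin 2 → ℝ → ℝ
  /-- the degrees of the `r_i` -/
  deg : Fin 2 → ℕ
  R_smooth : ∀ i, ContDiff ℝ 2 (R i)
  R_equiv : ∀ i x, R i (x + 1) = R i x + deg i
  deg_ge_one : ∀ i, 1 ≤ deg i
  deg_le_kappa : ∀ i, deg i ≤ toBase.kappa
  R_deriv_pos : ∀ i x, 0 < deriv (R i) x
  /-- (A3): `r_i' > ε⁻¹` wherever `r_i ∈ [d_i, 1 - d_i]` -/
  A3 : ∀ i x, rep (coeT (R i x)) ∈ Icc (toBase.dd i) (1 - toBase.dd i) →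
    eps⁻¹ < deriv (R i) x
  /-- (A4): `r_i' > c'` everywhere -/
  A4 : ∀ i x, toBase.c' < deriv (R i) x
  /-- the `x`-coordinates `x_n = π_x(γ_n(0))` determining `ι_n` -/
  x0 : ℕ → ℝ

namespace Setting

variable (S : Setting)

/-- The rotation map `r_i : 𝕋 → 𝕋`. -/
def rT (i : Fin 2) (z : Circ) : Circ := coeT (S.R i (rep z))

/-- `ι_n(u) = β u + x_n (mod 1)`. -/
def iota (n : ℕ) (u : ℝ) : Circ := coeT (S.toBase.beta * u + S.x0 n)

/-- `Φ₁`-image of a curve: `ψ(u) = θ(u) + (r₁(ι_n(u)), r₂(ι_n(u)))`. -/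
def psiOf (th : ℝ → Circ × Circ) (n : ℕ) (u : ℝ) : Circ × Circ :=
  ((th u).1 + S.rT 0 (S.iota n u), (th u).2 + S.rT 1 (S.iota n u))

/-- `Φ₂∘Φ₁`-image of a curve: `ζ(u) = (g₁^{τ(ψ(u))}(ψ¹(u)), g₂^{τ(ψ(u))}(ψ²(u)))`. -/
def zetaOf (th : ℝ → Circ × Circ) (n : ℕ) (u : ℝ) : Circ × Circ :=
  (S.toBase.gT 0 (S.toBase.tauT (S.psiOf th n u)) (S.psiOf th n u).1,
   S.toBase.gT 1 (S.toBase.tauT (S.psiOf th n u)) (S.psiOf th n u).2)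

/-- The iterated curves `θ_n`: `θ_0 ≡ (0,0)` and `θ_{n+1}(u) = ζ_n(e^{-λ} u)`. -/
def theta : ℕ → ℝ → Circ × Circ
  | 0 => fun _ => (0, 0)
  | n + 1 => fun u => S.zetaOf (theta n) n (Real.exp (-S.toBase.lam) * u)

/-- The curves `ψ_n`. -/
def psi (n : ℕ) (u : ℝ) : Circ × Circ := S.psiOf (S.theta n) n u

/-- The curves `ζ_n`. -/
def zeta (n : ℕ) (u : ℝ) : Circ × Circ := S.zetaOf (S.theta n) n u

/-- The component `ψ_n^i`. -/
def psiI (n : ℕ) (i : Fin 2) (u : ℝ) : Circ :=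
  if i = 0 then (S.psi n u).1 else (S.psi n u).2

/-- The component `ζ_n^i`. -/
def zetaI (n : ℕ) (i : Fin 2) (u : ℝ) : Circ :=
  if i = 0 then (S.zeta n u).1 else (S.zeta n u).2

/-- The length `e^{λ n} a` of the domain of the curves at step `n`. -/
def len (n : ℕ) : ℝ := Real.exp (S.toBase.lam * n) * S.toBase.a

end Setting


lemma coeT_add (x y : ℝ) : coeT (x + y) = coeT x + coeT y := rfl

lemma coeT_sub (x y : ℝ) : coeT (x - y) = coeT x - coeT y := rfl

lemma coeT_periodic : Function.Periodic coeT 1 := fun x => AddCircle.coe_add_period 1 x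

lemma coeT_eq_coeT_iff {x y : ℝ} : coeT x = coeT y ↔ ∃ k : ℤ, x - y = k := by
  rw [coeT, coeT, QuotientAddGroup.eq_iff_sub_mem, AddSubgroup.mem_zmultiples_iff]
  simp [eq_comm]

lemma rep_coeT (x : ℝ) : rep (coeT x) = Int.fract x := by
  have := AddCircle.coe_equivIco_mk_apply (1 : ℝ) x
  rwa [div_one, mul_one] at this

lemma periodic_coeT_comp {f : ℝ → ℝ} {m : ℤ} (hf : ∀ x, f (x + 1) = f x + m) :
    Function.Periodic (fun x => coeT (f x)) 1 := fun x => by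
  simpa [hf] using coeT_periodic.int_mul m (f x)

lemma Function.Periodic.apply_rep_coeT {α : Type*} {φ : ℝ → α} (hφ : Function.Periodic φ 1)
    (x : ℝ) : φ (rep (coeT x)) = φ x := by
  rw [rep_coeT, Int.fract, ← mul_one (⌊x⌋ : ℝ), hφ.sub_int_mul_eq]

lemma IsPreconnected.floor_eq_floor {s : Set ℝ} {g : ℝ → ℝ} (hs : IsPreconnected s)
    (hg : ContinuousOn g s) (hgZ : ∀ x ∈ s, ∀ k : ℤ, g x ≠ k) {v w : ℝ} (hv : v ∈ s)
    (hw : w ∈ s) : ⌊g v⌋ = ⌊g w⌋ := by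
  suffices key : ∀ v ∈ s, ∀ w ∈ s, ⌊g v⌋ ≤ ⌊g w⌋ from le_antisymm (key v hv w hw) (key w hw v hv)
  intro v hv w hw
  by_contra! hlt
  have hmem : ((⌊g v⌋ : ℤ) : ℝ) ∈ Icc (g w) (g v) :=
    ⟨(Int.floor_lt.mp hlt).le, Int.floor_le _⟩
  obtain ⟨x, hx, hgx⟩ := hs.intermediate_value hw hv hg hmem
  exact hgZ x hx _ hgx

lemma IsPreconnected.sub_eq_sub_of_coeT_eq {s : Set ℝ} {F G : ℝ → ℝ} (hs : IsPreconnected s)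
    (hF : ContinuousOn F s) (hG : ContinuousOn G s) (hFG : ∀ v ∈ s, coeT (F v) = coeT (G v))
    {v w : ℝ} (hv : v ∈ s) (hw : w ∈ s) : F v - G v = F w - G w := by
  -- `F - G` is integer valued, so `F - G + 1/2` avoids the integers and has floor `F - G`
  choose! k hk using fun v hv => coeT_eq_coeT_iff.mp (hFG v hv)
  have hfloor : ∀ x ∈ s, ⌊F x - G x + 1 / 2⌋ = k x := fun x hx => by
    rw [hk x hx, Int.floor_intCast_add]; norm_num
  have hZ : ∀ x ∈ s, ∀ l : ℤ, F x - G x + 1 / 2 ≠ l := fun x hx l hl => by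
    have : (2 * (l - k x) : ℤ) = 1 := by
      exact_mod_cast (by rw [← hk x hx]; linarith : (2 * ((l : ℝ) - k x)) = 1)
    omega
  have := hs.floor_eq_floor (g := fun x => F x - G x + 1 / 2)
    ((hF.sub hG).add continuousOn_const) hZ hv hw
  rw [hk v hv, hk w hw, ← hfloor v hv, ← hfloor w hw, this]

lemma HasCircDerivAt.hasDerivAt_of_lift {f : ℝ → Circ} {F : ℝ → ℝ} {d u : ℝ}
    (hd : HasCircDerivAt f d u) (hF : ContinuousAt F u) (hlift : ∀ᶠ v in 𝓝 u, coeT (F v) = f v) :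
    HasDerivAt F d u := by
  obtain ⟨F₂, hlift₂, hF₂⟩ := hd
  have hint : ∀ᶠ v in 𝓝 u, ∃ k : ℤ, F₂ v - F v = k := by
    filter_upwards [hlift, hlift₂] with v h h₂ using coeT_eq_coeT_iff.mp (h₂.trans h.symm)
  obtain ⟨k₀, hk₀⟩ := hint.self_of_nhds
  have hnear : ∀ᶠ v in 𝓝 u, |(F₂ v - F v) - (F₂ u - F u)| < 1 :=
    Metric.tendsto_nhds.mp ((hF₂.continuousAt.sub hF).tendsto) 1 one_pos
  have hconst : F =ᶠ[𝓝 u] fun v => F₂ v - k₀ := by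
    filter_upwards [hint, hnear] with v ⟨k, hk⟩ hv
    rw [hk, hk₀, ← Int.cast_sub, ← Int.cast_abs] at hv
    have : k = k₀ := by
      have := abs_lt.mp (by exact_mod_cast hv : |k - k₀| < 1); omega
    subst this; linarith
  exact (hF₂.sub_const _).congr_of_eventuallyEq hconst

lemma one_half_lt_fract_iff_odd_floor {x : ℝ} (hx : ∀ k : ℤ, 2 * x ≠ k) :
    1 / 2 < Int.fract x ↔ Odd ⌊2 * x⌋ := by
  have hx' : x = ⌊x⌋ + Int.fract x := (Int.floor_add_fract x).symm
  have hne : Int.fract x ≠ 1 / 2 := fun h => hx (2 * ⌊x⌋ + 1) (by push_cast; linarith)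
  rcases lt_or_gt_of_ne hne with h | h
  · have : ⌊2 * x⌋ = 2 * ⌊x⌋ := by
      rw [Int.floor_eq_iff]; push_cast; constructor <;> linarith [Int.fract_nonneg x]
    simp only [this, Int.not_odd_iff_even.mpr (even_two_mul _), iff_false, not_lt, h.le]
  · have : ⌊2 * x⌋ = 2 * ⌊x⌋ + 1 := by
      rw [Int.floor_eq_iff]; push_cast; constructor <;> linarith [Int.fract_lt_one x]
    simp only [this, odd_two_mul_add_one, h]

lemma StrictMonoOn.finite_setOf_two_mul_eq_intCast {P : ℝ → ℝ} {a b : ℝ}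
    (hP : StrictMonoOn P (Icc a b)) : {v ∈ Icc a b | ∃ k : ℤ, 2 * P v = k}.Finite := by
  refine Set.Finite.of_finite_image ?_ (hP.injOn.mono fun v hv => hv.1)
  refine ((Set.finite_Icc ⌈2 * P a⌉ ⌊2 * P b⌋).image fun k : ℤ => (k : ℝ) / 2).subset ?_
  rintro _ ⟨v, ⟨hv, k, hk⟩, rfl⟩
  have hab : a ≤ b := hv.1.trans hv.2
  have h₁ := hP.monotoneOn ⟨le_rfl, hab⟩ hv hv.1
  have h₂ := hP.monotoneOn hv ⟨hab, le_rfl⟩ hv.2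
  exact ⟨k, ⟨Int.ceil_le.mpr (by linarith), Int.le_floor.mpr (by linarith)⟩, by
    simp only; linarith⟩

lemma HasDerivAt.nonneg_of_monotoneOn_Ioo {f : ℝ → ℝ} {d u b : ℝ} (hf : HasDerivAt f d u)
    (hub : u < b) (hmono : MonotoneOn f (Ioo u b)) : 0 ≤ d := by
  refine hf.hasDerivWithinAt.nonneg_of_monotoneOn (accPt_principal_iff_nhdsWithin.mpr ?_) hmono
  rw [sdiff_singleton_eq_self fun h => lt_irrefl u h.1]
  exact left_nhdsWithin_Ioo_neBot hub

lemma Function.Periodic.exists_lipschitzWith {f : ℝ → ℝ} {c : ℝ} (hp : Function.Periodic f c)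
    (hc : c ≠ 0) (hf : ContDiff ℝ 1 f) : ∃ K, LipschitzWith K f := by
  have hper : Function.Periodic (deriv f) c := fun x => by
    rw [← deriv_comp_add_const, show (fun x => f (x + c)) = f from funext hp]
  obtain ⟨C, hC⟩ := isBounded_iff_forall_norm_le.mp
    (hper.isBounded_of_continuous hc (hf.continuous_deriv le_rfl))
  refine ⟨C.toNNReal, lipschitzWith_of_nnnorm_deriv_le (hf.differentiable one_ne_zero)
    fun x => ?_⟩
  rw [← NNReal.coe_le_coe, coe_nnnorm, Real.coe_toNNReal']
  exact (hC _ (mem_range_self x)).trans (le_max_left _ _)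

lemma exists_Ioo_inter_subset_singleton {D : Set ℝ} (hD : Dᶜ ∈ codiscrete ℝ) (x : ℝ) :
    ∃ ε > 0, Ioo (x - ε) (x + ε) ∩ D ⊆ {x} := by
  have := (mem_codiscreteWithin_iff_forall_mem_nhdsNE.mp hD) x (mem_univ x)
  rw [compl_univ, union_empty, Metric.mem_nhdsWithin_iff] at this
  obtain ⟨ε, hε, hsub⟩ := this
  refine ⟨ε, hε, fun v ⟨hv, hvD⟩ => by_contra fun hvx => hsub ⟨?_, hvx⟩ hvD⟩
  rw [Metric.mem_ball, Real.dist_eq, abs_lt]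
  constructor <;> linarith [hv.1, hv.2]

lemma compl_mem_codiscrete_of_finite_inter_Ioo {C D : Set ℝ} (hD : Dᶜ ∈ codiscrete ℝ)
    (hC : ∀ a b, a < b → Disjoint (Ioo a b) D → (C ∩ Ioo a b).Finite) : Cᶜ ∈ codiscrete ℝ := by
  refine codiscreteWithin_iff_locallyFiniteComplementWithin.mpr fun x _ => ?_
  obtain ⟨ε, hε, hεD⟩ := exists_Ioo_inter_subset_singleton hD x
  have hclean : ∀ a b, Ioo a b ⊆ Ioo (x - ε) (x + ε) → x ∉ Ioo a b → Disjoint (Ioo a b) D :=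
    fun a b hab hx => Set.disjoint_left.mpr fun v hv hvD => hx (by
      rwa [← mem_singleton_iff.mp (hεD ⟨hab hv, hvD⟩)])
  have hleft := hC (x - ε) x (by linarith)
    (hclean _ _ (Ioo_subset_Ioo le_rfl (by linarith)) fun h => h.2.false)
  have hright := hC x (x + ε) (by linarith)
    (hclean _ _ (Ioo_subset_Ioo (by linarith) le_rfl) fun h => h.1.false)
  refine ⟨Ioo (x - ε) (x + ε), Ioo_mem_nhds (by linarith) (by linarith),
    ((hleft.union hright).union (finite_singleton x)).subset ?_⟩
  rintro v ⟨hv, -, hvC⟩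
  replace hvC : v ∈ C := not_not.mp hvC
  rcases lt_trichotomy v x with h | rfl | h
  · exact Or.inl (Or.inl ⟨hvC, hv.1, h⟩)
  · exact Or.inr rfl
  · exact Or.inl (Or.inr ⟨hvC, h, hv.2⟩)

lemma preimage_const_mul_compl_mem_codiscrete {D : Set ℝ} (hD : Dᶜ ∈ codiscrete ℝ) {c : ℝ}
    (hc : c ≠ 0) : ((fun u => c * u) ⁻¹' D)ᶜ ∈ codiscrete ℝ := by
  rw [codiscrete, codiscreteWithin_iff_locallyFiniteComplementWithin] at hD ⊢
  intro x _
  obtain ⟨t, ht, hfin⟩ := hD (c * x) (mem_univ _)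
  refine ⟨(fun u => c * u) ⁻¹' t, (continuous_const_mul c).continuousAt.preimage_mem_nhds ht, ?_⟩
  convert hfin.preimage (mul_right_injective₀ hc).injOn using 1
  ext; simp

theorem contDiffAt_flow {V : ℝ → ℝ} {K : NNReal} (hV : LipschitzWith K V) {G : ℝ → ℝ → ℝ}
    (hG0 : ∀ x, G 0 x = x) (hG : ∀ x t, HasDerivAt (fun s => G s x) (V (G t x)) t)
    {x₀ : ℝ} (hx₀ : V x₀ ≠ 0) (t : ℝ) : ContDiffAt ℝ 1 (G t) x₀ := by
  -- near `x₀` the flow is conjugate to a translation: `G t x = Ξ (W x + t)`, where `Ξ` is the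
  -- orbit of `x₀` and `W` is a local inverse of `Ξ`, which exists since `Ξ' 0 = V x₀ ≠ 0`
  set Ξ : ℝ → ℝ := fun s => G s x₀
  have hΞdiff : Differentiable ℝ Ξ := fun s => (hG x₀ s).differentiableAt
  have hΞ : ContDiff ℝ 1 Ξ := by
    rw [contDiff_one_iff_deriv, show deriv Ξ = fun s => V (Ξ s) from funext fun s => (hG x₀ s).deriv]
    exact ⟨hΞdiff, hV.continuous.comp hΞdiff.continuous⟩
  have hΞ0 : Ξ 0 = x₀ := hG0 x₀
  have hΞ' := hG x₀ 0
  rw [hG0] at hΞ'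
  have hd := hΞ'.hasFDerivAt_equiv hx₀
  have hW := hΞ.contDiffAt.to_localInverse hd one_ne_zero
  set W := hΞ.contDiffAt.localInverse hd one_ne_zero
  have hΞW : ∀ᶠ x in 𝓝 (Ξ 0), Ξ (W x) = x :=
    (hΞ.contDiffAt.hasStrictFDerivAt' hd one_ne_zero).eventually_right_inverse
  rw [hΞ0] at hW hΞW
  have hflow : ∀ᶠ x in 𝓝 x₀, G t x = Ξ (W x + t) := by
    filter_upwards [hΞW] with x hx
    have hshift : ∀ s, HasDerivAt (fun r => Ξ (W x + r)) (V (Ξ (W x + s))) s := fun s =>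
      (hG x₀ (W x + s)).comp_const_add (W x) s
    have := ODE_solution_unique_univ (v := fun _ => V) (s := fun _ => univ) (t₀ := 0)
      (fun _ => hV.lipschitzOnWith) (fun s => ⟨hG x s, trivial⟩) (fun s => ⟨hshift s, trivial⟩)
      (by simp [hG0, hx])
    exact congrFun this t
  exact (hΞ.contDiffAt.comp x₀ (hW.add contDiffAt_const)).congr_of_eventuallyEq hflow

namespace Base

variable (B : Base)

lemma G_neg_apply (i : Fin 2) (t x : ℝ) : B.G i (-t) (B.G i t x) = x := by
  rw [← B.G_add, neg_add_cancel, B.G_zero]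

lemma G_strictMono (i : Fin 2) (t : ℝ) : StrictMono (B.G i t) := by
  intro x y hxy
  have hne : ∀ s, B.G i s y - B.G i s x ≠ 0 := fun s h => hxy.ne' <| by
    rw [← B.G_neg_apply i s y, sub_eq_zero.mp h, B.G_neg_apply]
  have hcont : Continuous fun s => B.G i s y - B.G i s x :=
    (continuous_iff_continuousAt.mpr fun s => (B.G_ode i y s).continuousAt.sub
      (B.G_ode i x s).continuousAt)
  by_contra! hle
  have h0 : (0 : ℝ) ∈ uIcc (B.G i t y - B.G i t x) (B.G i 0 y - B.G i 0 x) := by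
    rw [B.G_zero, B.G_zero]; exact mem_uIcc.mpr (Or.inl ⟨by linarith, by linarith⟩)
  obtain ⟨s, -, hs⟩ := intermediate_value_uIcc hcont.continuousOn h0
  exact hne s hs

lemma G_continuous (i : Fin 2) (t : ℝ) : Continuous (B.G i t) :=
  (B.G_strictMono i t).monotone.continuous_of_surjective fun y =>
    ⟨B.G i (-t) y, by simpa using B.G_neg_apply i (-t) y⟩

lemma contDiffAt_G (i : Fin 2) (t : ℝ) {x : ℝ} (hx : ∀ k : ℤ, 2 * x ≠ k) :
    ContDiffAt ℝ 1 (B.G i t) x := by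
  obtain ⟨K, hK⟩ := (Function.Periodic.exists_lipschitzWith (B.V_periodic i) one_ne_zero
    ((B.V_smooth i).of_le one_le_two))
  refine contDiffAt_flow hK (B.G_zero i) (B.G_ode i) (fun hV => ?_) t
  obtain ⟨k, rfl | rfl⟩ := (B.V_zero_iff i x).mp hV
  · exact hx (2 * k) (by push_cast; ring)
  · exact hx (2 * k + 1) (by push_cast; ring)

lemma gT_coeT (i : Fin 2) (t x : ℝ) : B.gT i t (coeT x) = coeT (B.G i t x) :=
  (periodic_coeT_comp (m := 1) (by simpa using B.G_periodic i t)).apply_rep_coeT x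

end Base

def pr (j : Fin 2) (z : Circ × Circ) : Circ := if j = 0 then z.1 else z.2

lemma cnt_eq_cnt {z w : Circ × Circ} (h : ∀ j, 1 / 2 < rep (pr j z) ↔ 1 / 2 < rep (pr j w)) :
    cnt z = cnt w := by
  have h₁ : 1 / 2 < rep z.1 ↔ 1 / 2 < rep w.1 := h 0
  have h₂ : 1 / 2 < rep z.2 ↔ 1 / 2 < rep w.2 := h 1
  simp only [cnt, h₁, h₂]

-- Monotonicity up to the endpoints bounds the lift on the piece, so that `ψ` meets the rest
-- points of the flows only finitely often there.
structure IsMonotoneLiftOn (f : ℝ → Circ) (F : ℝ → ℝ) (a b : ℝ) : Prop where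
  coeT_eq : ∀ v ∈ Ioo a b, coeT (F v) = f v
  monotoneOn : MonotoneOn F (Icc a b)
  continuousOn : ContinuousOn F (Icc a b)
  contDiffAt : ∀ v ∈ Ioo a b, ContDiffAt ℝ 1 F v

namespace IsMonotoneLiftOn

variable {f : ℝ → Circ} {F : ℝ → ℝ} {a b : ℝ}

lemma rep_eq (hF : IsMonotoneLiftOn f F a b) {v : ℝ} (hv : v ∈ Ioo a b) :
    rep (f v) = Int.fract (F v) := by
  rw [← hF.coeT_eq v hv, rep_coeT]

lemma one_half_lt_rep_iff (hF : IsMonotoneLiftOn f F a b) (hZ : ∀ v ∈ Ioo a b, ∀ k : ℤ, 2 * F v ≠ k) {v w : ℝ}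
    (hv : v ∈ Ioo a b) (hw : w ∈ Ioo a b) : 1 / 2 < rep (f v) ↔ 1 / 2 < rep (f w) := by
  rw [hF.rep_eq hv, hF.rep_eq hw, one_half_lt_fract_iff_odd_floor (hZ v hv),
    one_half_lt_fract_iff_odd_floor (hZ w hw), isPreconnected_Ioo.floor_eq_floor
      (g := fun v => 2 * F v) (continuousOn_const.mul (hF.continuousOn.mono Ioo_subset_Icc_self))
      hZ hv hw]

lemma exists_two_mul_rep_eq_iff (hF : IsMonotoneLiftOn f F a b) {v : ℝ} (hv : v ∈ Ioo a b) :
    (∃ k : ℤ, 2 * rep (f v) = k) ↔ ∃ k : ℤ, 2 * F v = k := by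
  rw [hF.rep_eq hv, Int.fract]
  constructor
  · rintro ⟨k, hk⟩; exact ⟨k + 2 * ⌊F v⌋, by push_cast; linarith⟩
  · rintro ⟨k, hk⟩; exact ⟨k - 2 * ⌊F v⌋, by push_cast; linarith⟩

lemma isC1At {u : ℝ} (hF : IsMonotoneLiftOn f F a b) (hu : u ∈ Ioo a b) : IsC1At f u := by
  have hsub : Ioo (u - min (u - a) (b - u)) (u + min (u - a) (b - u)) ⊆ Ioo a b :=
    Ioo_subset_Ioo (by linarith [min_le_left (u - a) (b - u)])
      (by linarith [min_le_right (u - a) (b - u)])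
  exact ⟨F, _, lt_min (by linarith [hu.1]) (by linarith [hu.2]),
    fun v hv => hF.coeT_eq v (hsub hv),
    fun v hv => (hF.contDiffAt v (hsub hv)).contDiffWithinAt⟩

lemma add {G : ℝ → ℝ} (hF : IsMonotoneLiftOn f F a b) (hG : Monotone G)
    (hG' : ContDiff ℝ 1 G) :
    IsMonotoneLiftOn (fun v => f v + coeT (G v)) (fun v => F v + G v) a b where
  coeT_eq v hv := by rw [coeT_add, hF.coeT_eq v hv]
  monotoneOn := hF.monotoneOn.add (hG.monotoneOn _)
  continuousOn := hF.continuousOn.add hG'.continuous.continuousOn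
  contDiffAt v hv := (hF.contDiffAt v hv).add hG'.contDiffAt

lemma comp_mul_left {c : ℝ} (hF : IsMonotoneLiftOn f F (c * a) (c * b)) (hc : 0 < c) :
    IsMonotoneLiftOn (fun u => f (c * u)) (fun u => F (c * u)) a b where
  coeT_eq u hu := hF.coeT_eq _ ⟨by nlinarith [hu.1], by nlinarith [hu.2]⟩
  monotoneOn := hF.monotoneOn.comp ((monotone_id.const_mul hc.le).monotoneOn _)
    fun u hu => ⟨by nlinarith [hu.1], by nlinarith [hu.2]⟩
  continuousOn := hF.continuousOn.comp (continuous_const_mul c).continuousOn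
    fun u hu => ⟨by nlinarith [hu.1], by nlinarith [hu.2]⟩
  contDiffAt u hu := (hF.contDiffAt _ ⟨by nlinarith [hu.1], by nlinarith [hu.2]⟩).comp u
    (contDiffAt_id.const_smul c)

end IsMonotoneLiftOn

def HasMonotoneLiftsOff (θ : ℝ → Circ × Circ) (D : Set ℝ) : Prop :=
  ∀ a b, a < b → Disjoint (Ioo a b) D → ∀ j, ∃ F, IsMonotoneLiftOn (fun v => pr j (θ v)) F a b

def PiecewiseMonotoneC1 (θ : ℝ → Circ × Circ) : Prop :=
  ∃ D : Set ℝ, Dᶜ ∈ codiscrete ℝ ∧ HasMonotoneLiftsOff θ D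

lemma PiecewiseMonotoneC1.comp_mul_left {θ : ℝ → Circ × Circ} (hθ : PiecewiseMonotoneC1 θ)
    {c : ℝ} (hc : 0 < c) : PiecewiseMonotoneC1 fun u => θ (c * u) := by
  obtain ⟨D, hD, hlift⟩ := hθ
  refine ⟨(fun u => c * u) ⁻¹' D, preimage_const_mul_compl_mem_codiscrete hD hc.ne', ?_⟩
  intro a b hab hdisj j
  have hdisj' : Disjoint (Ioo (c * a) (c * b)) D := Set.disjoint_left.mpr fun v hv hvD =>
    Set.disjoint_left.mp hdisj (show v / c ∈ Ioo a b from
      ⟨by rw [lt_div_iff₀ hc, mul_comm]; exact hv.1, by rw [div_lt_iff₀ hc, mul_comm]; exact hv.2⟩)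
      (show c * (v / c) ∈ D by rwa [mul_div_cancel₀ _ hc.ne'])
  obtain ⟨F, hF⟩ := hlift _ _ (by nlinarith) hdisj' j
  exact ⟨_, hF.comp_mul_left hc⟩

namespace Setting

variable (S : Setting)

lemma rT_coeT (i : Fin 2) (x : ℝ) : S.rT i (coeT x) = coeT (S.R i x) :=
  (periodic_coeT_comp (m := S.deg i) (by simpa using S.R_equiv i)).apply_rep_coeT x

def rLift (i : Fin 2) (n : ℕ) (v : ℝ) : ℝ := S.R i (S.beta * v + S.x0 n)

lemma coeT_rLift (i : Fin 2) (n : ℕ) (v : ℝ) : coeT (S.rLift i n v) = S.rT i (S.iota n v) :=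
  (S.rT_coeT i _).symm

lemma hasDerivAt_rLift (i : Fin 2) (n : ℕ) (u : ℝ) :
    HasDerivAt (S.rLift i n) (deriv (S.R i) (S.beta * u + S.x0 n) * S.beta) u := by
  have hlin : HasDerivAt (fun v => S.beta * v + S.x0 n) S.beta u := by
    simpa using ((hasDerivAt_id u).const_mul S.beta).add_const (S.x0 n)
  exact (((S.R_smooth i).differentiable two_ne_zero _).hasDerivAt).comp u hlin

lemma contDiff_rLift (i : Fin 2) (n : ℕ) : ContDiff ℝ 1 (S.rLift i n) :=
  ((S.R_smooth i).of_le one_le_two).comp ((contDiff_const.mul contDiff_id).add contDiff_const)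

lemma strictMono_rLift (i : Fin 2) (n : ℕ) : StrictMono (S.rLift i n) :=
  strictMono_of_deriv_pos fun u => by
    rw [(S.hasDerivAt_rLift i n u).deriv]
    exact mul_pos (S.R_deriv_pos i _) S.beta_pos

lemma pr_psiOf (θ : ℝ → Circ × Circ) (n : ℕ) (j : Fin 2) (v : ℝ) :
    pr j (S.psiOf θ n v) = pr j (θ v) + S.rT j (S.iota n v) := by
  fin_cases j <;> rfl

lemma pr_zetaOf (θ : ℝ → Circ × Circ) (n : ℕ) (j : Fin 2) (v : ℝ) :
    pr j (S.zetaOf θ n v) = S.gT j (S.tauT (S.psiOf θ n v)) (pr j (S.psiOf θ n v)) := by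
  fin_cases j <;> rfl

lemma psiI_eq (n : ℕ) (i : Fin 2) : S.psiI n i = fun v => pr i (S.psiOf (S.theta n) n v) :=
  funext fun v => by fin_cases i <;> rfl

lemma isMonotoneLiftOn_psiOf {θ : ℝ → Circ × Circ} {n : ℕ} {j : Fin 2} {F : ℝ → ℝ} {a b : ℝ}
    (hF : IsMonotoneLiftOn (fun v => pr j (θ v)) F a b) :
    IsMonotoneLiftOn (fun v => pr j (S.psiOf θ n v)) (fun v => F v + S.rLift j n v) a b := by
  have hψ : (fun v => pr j (S.psiOf θ n v)) = fun v => pr j (θ v) + coeT (S.rLift j n v) :=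
    funext fun v => by rw [S.pr_psiOf, S.coeT_rLift]
  rw [hψ]
  exact hF.add (S.strictMono_rLift j n).monotone (S.contDiff_rLift j n)

lemma exists_psiOf_lift {θ : ℝ → Circ × Circ} {D : Set ℝ} (hθ : HasMonotoneLiftsOff θ D)
    (n : ℕ) {a b : ℝ} (hab : a < b) (hD : Disjoint (Ioo a b) D) (j : Fin 2) :
    ∃ P, IsMonotoneLiftOn (fun v => pr j (S.psiOf θ n v)) P a b ∧ StrictMonoOn P (Icc a b) := by
  obtain ⟨F, hF⟩ := hθ a b hab hD j
  exact ⟨_, S.isMonotoneLiftOn_psiOf hF,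
    hF.monotoneOn.add_strictMono ((S.strictMono_rLift j n).strictMonoOn _)⟩

-- `2 * rep z ∈ ℤ` means `z ∈ {0, 1/2}`, the rest points of the flows.
def crossings (θ : ℝ → Circ × Circ) (n : ℕ) : Set ℝ :=
  {v | ∃ j : Fin 2, ∃ k : ℤ, 2 * rep (pr j (S.psiOf θ n v)) = k}

lemma crossings_compl_mem_codiscrete {θ : ℝ → Circ × Circ} {D : Set ℝ} (hD : Dᶜ ∈ codiscrete ℝ)
    (hθ : HasMonotoneLiftsOff θ D) (n : ℕ) : (S.crossings θ n)ᶜ ∈ codiscrete ℝ := by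
  refine compl_mem_codiscrete_of_finite_inter_Ioo hD fun a b hab hdisj => ?_
  choose P hP hPmono using S.exists_psiOf_lift hθ n hab hdisj
  refine (Set.finite_iUnion fun j => (hPmono j).finite_setOf_two_mul_eq_intCast).subset ?_
  rintro v ⟨⟨j, hj⟩, hv⟩
  exact mem_iUnion.mpr ⟨j, Ioo_subset_Icc_self hv, ((hP j).exists_two_mul_rep_eq_iff hv).mp hj⟩

lemma hasMonotoneLiftsOff_zetaOf {θ : ℝ → Circ × Circ} {D : Set ℝ}
    (hθ : HasMonotoneLiftsOff θ D) (n : ℕ) :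
    HasMonotoneLiftsOff (S.zetaOf θ n) (D ∪ S.crossings θ n) := by
  intro a b hab hdisj j
  rw [disjoint_union_right] at hdisj
  choose P hP _ using S.exists_psiOf_lift hθ n hab hdisj.1
  have hZ : ∀ j, ∀ v ∈ Ioo a b, ∀ k : ℤ, 2 * P j v ≠ k := fun j v hv k hk =>
    Set.disjoint_left.mp hdisj.2 hv ⟨j, ((hP j).exists_two_mul_rep_eq_iff hv).mpr ⟨k, hk⟩⟩
  have hm : (a + b) / 2 ∈ Ioo a b := ⟨by linarith, by linarith⟩
  set t₀ := S.tauT (S.psiOf θ n ((a + b) / 2))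
  -- the return time is constant on the piece since no coordinate of `ψ` crosses `0` or `1/2`
  have hτ : ∀ v ∈ Ioo a b, S.tauT (S.psiOf θ n v) = t₀ := fun v hv =>
    congrArg (fun m => (1 - S.b) * (1 - S.Phi m)⁻¹)
      (cnt_eq_cnt fun j => (hP j).one_half_lt_rep_iff (hZ j) hv hm)
  refine ⟨fun v => S.G j t₀ (P j v), ⟨fun v hv => ?_, ?_, ?_, fun v hv => ?_⟩⟩
  · rw [S.pr_zetaOf, hτ v hv, ← (hP j).coeT_eq v hv, Base.gT_coeT]
  · exact (S.G_strictMono j t₀).monotone.comp_monotoneOn (hP j).monotoneOn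
  · exact (S.G_continuous j t₀).comp_continuousOn (hP j).continuousOn
  · exact (S.contDiffAt_G j t₀ (hZ j v hv)).comp v ((hP j).contDiffAt v hv)

lemma piecewiseMonotoneC1_theta (n : ℕ) : PiecewiseMonotoneC1 (S.theta n) := by
  induction n with
  | zero =>
    refine ⟨∅, by simp, fun a b _ _ j => ⟨0, ⟨fun v _ => ?_, monotoneOn_const,
      continuousOn_const, fun v _ => contDiffAt_const⟩⟩⟩
    fin_cases j <;> rfl
  | succ n ih =>
    obtain ⟨D, hD, hθ⟩ := ih
    refine PiecewiseMonotoneC1.comp_mul_left (θ := S.zetaOf (S.theta n) n)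
      ⟨_, ?_, S.hasMonotoneLiftsOff_zetaOf hθ n⟩ (Real.exp_pos _)
    rw [compl_union]
    exact inter_mem hD (S.crossings_compl_mem_codiscrete hD hθ n)

lemma finite_setOf_not_isC1At_psiI (n : ℕ) (i : Fin 2) :
    {u : ℝ | u ∈ Icc 0 (S.len n) ∧ ¬ IsC1At (S.psiI n i) u}.Finite := by
  obtain ⟨D, hD, hθ⟩ := S.piecewiseMonotoneC1_theta n
  refine (isCompact_Icc.finite_sdiff_of_mem_codiscreteWithin
    (codiscreteWithin_mono (subset_univ _) hD)).subset fun u ⟨hu, hC1⟩ => ⟨hu, fun huD => hC1 ?_⟩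
  obtain ⟨ε, hε, hεD⟩ := exists_Ioo_inter_subset_singleton hD u
  have hdisj : Disjoint (Ioo (u - ε) (u + ε)) D := Set.disjoint_left.mpr fun v hv hvD =>
    huD (mem_singleton_iff.mp (hεD ⟨hv, hvD⟩) ▸ hvD)
  obtain ⟨P, hP, -⟩ := S.exists_psiOf_lift hθ n (by linarith) hdisj i
  rw [psiI_eq]
  exact hP.isC1At ⟨by linarith, by linarith⟩

lemma le_of_hasCircDerivAt_psiI {n : ℕ} {i : Fin 2} {u d : ℝ} (hC1 : IsC1At (S.psiI n i) u)
    (hd : HasCircDerivAt (S.psiI n i) d u) : S.beta * S.c' ≤ d := by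
  obtain ⟨D, hD, hθ⟩ := S.piecewiseMonotoneC1_theta n
  obtain ⟨Fψ, ε, hε, hlift, hFψ⟩ := hC1
  have hball : Ioo (u - ε) (u + ε) ∈ 𝓝 u := Ioo_mem_nhds (by linarith) (by linarith)
  have hFψd := hd.hasDerivAt_of_lift (hFψ.continuousOn.continuousAt hball)
    (eventually_of_mem hball hlift)
  set T := fun v => Fψ v - S.rLift i n v
  -- `T` lifts `θ_n^i`, which may jump at `u`; being monotone on one side of `u` gives `T' u ≥ 0`
  have hT : ∀ v ∈ Ioo (u - ε) (u + ε), coeT (T v) = pr i (S.theta n v) := fun v hv => by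
    simp only [T, coeT_sub, hlift v hv, S.psiI_eq, S.coeT_rLift, S.pr_psiOf, add_sub_cancel_right]
  obtain ⟨ε', hε', hε'D⟩ := exists_Ioo_inter_subset_singleton hD u
  set η := min ε ε'
  have hη : Ioo u (u + η) ⊆ Ioo (u - ε) (u + ε) ∩ Ioo (u - ε') (u + ε') := fun v hv =>
    ⟨⟨by linarith [hv.1], by linarith [hv.2, min_le_left ε ε']⟩,
      ⟨by linarith [hv.1], by linarith [hv.2, min_le_right ε ε']⟩⟩
  have hdisj : Disjoint (Ioo u (u + η)) D := Set.disjoint_left.mpr fun v hv hvD =>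
    (hv.1.ne' (mem_singleton_iff.mp (hε'D ⟨(hη hv).2, hvD⟩)))
  obtain ⟨F, hF⟩ := hθ u (u + η) (by simp [η, hε, hε']) hdisj i
  have hTcont : ContinuousOn T (Ioo u (u + η)) :=
    (hFψ.continuousOn.sub (S.contDiff_rLift i n).continuous.continuousOn).mono
      fun v hv => (hη hv).1
  have hmono : MonotoneOn T (Ioo u (u + η)) := fun v hv w hw hvw => by
    have := isPreconnected_Ioo.sub_eq_sub_of_coeT_eq (hF.continuousOn.mono Ioo_subset_Icc_self)
      hTcont (fun x hx => (hF.coeT_eq x hx).trans (hT x (hη hx).1).symm) hv hw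
    linarith [hF.monotoneOn (Ioo_subset_Icc_self hv) (Ioo_subset_Icc_self hw) hvw]
  have h₀ := (hFψd.sub (S.hasDerivAt_rLift i n u)).nonneg_of_monotoneOn_Ioo
    (by simp [η, hε, hε']) hmono
  nlinarith [S.A4 i (S.beta * u + S.x0 n), S.beta_pos]

end Setting

theorem stmt_11 (B : Base) :
    ∃ c₁ : ℝ, 0 < c₁ ∧ ∀ S : Setting, S.toBase = B → ∀ (n : ℕ) (i : Fin 2),
      ({u : ℝ | u ∈ Icc 0 (S.len n) ∧ ¬ IsC1At (S.psiI n i) u}).Finite ∧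
      (∀ u ∈ Icc (0:ℝ) (S.len n), IsC1At (S.psiI n i) u →
        ∀ d : ℝ, HasCircDerivAt (S.psiI n i) d u → c₁ ≤ d) := by
  refine ⟨B.beta * B.c', mul_pos B.beta_pos B.c'_pos, fun S hS n i => ?_⟩
  subst hS
  exact ⟨S.finite_setOf_not_isC1At_psiI n i,
    fun _ _ hC1 _ hd => S.le_of_hasCircDerivAt_psiI hC1 hd⟩

end
end
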